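/- arXiv:1805.10751 — 7 statements merged into one kernel-verified Lean document; each statement's English description precedes it below -/
import Mathlib

section
/- Let C be a category. The class S of eventually invertible morphisms in the category Cauch(ℕ, C) of Cauchy sequences in C admits a calculus of left fractions, i.e. S contains all identities and is closed under composition, every cospan X' ←σ− X → Y with σ ∈ S can be completed to a commutative square X → Y, X' → Y' with the morphism Y → Y' in S, and for any pair of parallel morphisms α, β : X → Y that are equalized by some σ : X' → X in S there exists τ : Y → Y' in S with τα = τβ. -/
/-!
An eventually invertible `σ : X ⟶ Y` has an inverse "up to reindexing": for a suitable monotone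
inflationary `u : ℕ → ℕ` there is `η : Y ⟶ X ∘ u` such that both composites `σ ≫ η` and
`η ≫ σ ∘ u` are the transition maps `X ⟶ X ∘ u` and `Y ⟶ Y ∘ u`. The component `η i` is the
preimage of `Y i ⟶ Y (u i)` under the bijection `Hom(Y i, X (u i)) ≃ Hom(Y i, Y (u i))`, which is
available once `u i` is large enough relative to `Y i`. For Cauchy sequences the transition map
`Y ⟶ Y ∘ u` is eventually invertible, and composing with `η` turns both Ore conditions into the
naturality of transition maps.
-/

open CategoryTheory CategoryTheory.Limits

universe v u

namespace SeqCompletion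

/-- A sequence `X : ℕ ⥤ C` is a Cauchy sequence if for every object `C'` of `C`
the maps `Hom(C', X i) → Hom(C', X j)` are bijective for all `j ≥ i ≥ n` for some `n`. -/
def IsCauchy {C : Type u} [Category.{v} C] (X : ℕ ⥤ C) : Prop :=
  ∀ C' : C, ∃ n : ℕ, ∀ (i j : ℕ), n ≤ i → ∀ (hij : i ≤ j),
    Function.Bijective (fun g : C' ⟶ X.obj i => g ≫ X.map (homOfLE hij))

variable (C : Type u) [Category.{v} C]

/-- The category `Cauch(ℕ, C)` of Cauchy sequences in `C`,
a full subcategory of `Fun(ℕ, C)`. -/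
abbrev CauchCat := ObjectProperty.FullSubcategory (fun X : ℕ ⥤ C => IsCauchy X)

/-- The class of eventually invertible morphisms between Cauchy sequences:
`φ : X ⟶ Y` such that for every `C'` the maps `Hom(C', X i) → Hom(C', Y i)` are
bijective for all sufficiently large `i`. -/
def evtInv : MorphismProperty (CauchCat C) := fun X _Y φ =>
  ∀ C' : C, ∃ n : ℕ, ∀ i : ℕ, n ≤ i →
    Function.Bijective (fun g : C' ⟶ X.obj.obj i =>
      g ≫ ((ObjectProperty.ι _).map φ).app i)


section

variable {C}

instance : (evtInv C).IsMultiplicative where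
  id_mem X C' := ⟨0, fun i _ => by
    simp only [ObjectProperty.ι_map, ObjectProperty.FullSubcategory.id_hom, NatTrans.id_app,
      Category.comp_id]
    exact Function.bijective_id⟩
  comp_mem f g hf hg C' := by
    obtain ⟨n₁, h₁⟩ := hf C'
    obtain ⟨n₂, h₂⟩ := hg C'
    refine ⟨max n₁ n₂, fun i hi => ?_⟩
    convert (h₂ i (le_of_max_le_right hi)).comp (h₁ i (le_of_max_le_left hi)) using 1
    funext a
    simp

variable (u : ℕ →o ℕ)

lemma IsCauchy.reindex (hu : ∀ i, i ≤ u i) {X : ℕ ⥤ C} (hX : IsCauchy X) :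
    IsCauchy (u.toFunctor ⋙ X) := by
  intro C'
  obtain ⟨n, hn⟩ := hX C'
  exact ⟨n, fun i j hi hij => hn (u i) (u j) (hi.trans (hu i)) (u.monotone hij)⟩

def toReindex (hu : ∀ i, i ≤ u i) (X : ℕ ⥤ C) : X ⟶ u.toFunctor ⋙ X where
  app i := X.map (homOfLE (hu i))
  naturality i j f := by
    simp only [Functor.comp_map, ← X.map_comp]
    rfl

lemma toReindex_naturality (hu : ∀ i, i ≤ u i) {X Y : ℕ ⥤ C} (f : X ⟶ Y) :
    f ≫ toReindex u hu Y = toReindex u hu X ≫ Functor.whiskerLeft u.toFunctor f := by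
  ext i
  exact (f.naturality _).symm

def CauchCat.reindex (hu : ∀ i, i ≤ u i) (X : CauchCat C) : CauchCat C :=
  ⟨u.toFunctor ⋙ X.obj, X.property.reindex u hu⟩

def CauchCat.toReindex (hu : ∀ i, i ≤ u i) (X : CauchCat C) : X ⟶ X.reindex u hu :=
  ObjectProperty.homMk (SeqCompletion.toReindex u hu X.obj)

lemma evtInv_toReindex (hu : ∀ i, i ≤ u i) (X : CauchCat C) : evtInv C (X.toReindex u hu) := by
  intro C'
  obtain ⟨n, hn⟩ := X.property C'
  exact ⟨n, fun i hi => hn i (u i) hi (hu i)⟩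

lemma exists_reindex_inverse {X Y : ℕ ⥤ C} (σ : X ⟶ Y)
    (hσ : ∀ C' : C, ∃ n, ∀ i, n ≤ i → Function.Bijective (fun g : C' ⟶ X.obj i => g ≫ σ.app i)) :
    ∃ (u : ℕ →o ℕ) (hu : ∀ i, i ≤ u i) (η : Y ⟶ u.toFunctor ⋙ X),
      σ ≫ η = toReindex u hu X ∧ η ≫ Functor.whiskerLeft u.toFunctor σ = toReindex u hu Y := by
  choose N hN using hσ
  -- `N (Y.obj i) ≤ u j` for `i ≤ j` yields `η i` and its naturality,
  -- `N (X.obj i) ≤ u i` yields `σ ≫ η = toReindex`.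
  let v (i : ℕ) : ℕ := i ⊔ N (Y.obj i) ⊔ N (X.obj i)
  let u := partialSups v
  have hle (i : ℕ) : v i ≤ u i := le_partialSups v i
  have hu (i : ℕ) : i ≤ u i := le_sup_left.trans (le_sup_left.trans (hle i))
  have hY {i j : ℕ} (hij : i ≤ j) : N (Y.obj i) ≤ u j :=
    (le_sup_right.trans le_sup_left).trans ((hle i).trans (u.monotone hij))
  have hX (i : ℕ) : N (X.obj i) ≤ u i := le_sup_right.trans (hle i)
  choose η hη using fun i => (hN (Y.obj i) (u i) (hY le_rfl)).2 (Y.map (homOfLE (hu i)))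
  replace hη (i : ℕ) : η i ≫ σ.app (u i) = Y.map (homOfLE (hu i)) := hη i
  refine ⟨u, hu, { app := η, naturality := fun i j f => ?_ }, ?_, ?_⟩
  · apply (hN (Y.obj i) (u j) (hY (leOfHom f))).1
    change (Y.map f ≫ η j) ≫ σ.app (u j) =
      (η i ≫ X.map (homOfLE (u.monotone (leOfHom f)))) ≫ σ.app (u j)
    rw [Category.assoc, hη, Category.assoc, σ.naturality, reassoc_of% hη, ← Y.map_comp,
      ← Y.map_comp]
    rfl
  · ext i
    apply (hN (X.obj i) (u i) (hX i)).1
    change (σ.app i ≫ η i) ≫ σ.app (u i) = X.map (homOfLE (hu i)) ≫ σ.app (u i)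
    rw [Category.assoc, hη, ← σ.naturality]
  · ext i
    exact hη i

end

/-- The eventually invertible morphisms in `Cauch(ℕ, C)` admit a calculus of left
fractions: they contain the identities and are stable under composition, every cospan
`X' ← X → Y` with the first leg eventually invertible can be completed to a commutative
square whose new leg is eventually invertible, and two parallel morphisms equalized by
an eventually invertible morphism are coequalized by one. -/
theorem eventuallyInvertible_hasLeftCalculusOfFractions :
    (evtInv C).HasLeftCalculusOfFractions := by
  refine { exists_leftFraction := fun X Y φ => ?_, ext := fun X' X Y f₁ f₂ s hs hsf => ?_ }
  · obtain ⟨u, hu, η, hη, -⟩ := exists_reindex_inverse φ.s.hom φ.hs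
    refine ⟨⟨ObjectProperty.homMk (η ≫ Functor.whiskerLeft u.toFunctor φ.f.hom),
      Y.toReindex u hu, evtInv_toReindex u hu Y⟩, ?_⟩
    ext1
    change φ.f.hom ≫ toReindex u hu Y.obj = φ.s.hom ≫ η ≫ _
    rw [toReindex_naturality, ← hη, Category.assoc]
  · obtain ⟨u, hu, η, -, hη⟩ := exists_reindex_inverse s.hom hs
    have hf (f : X ⟶ Y) : (f ≫ Y.toReindex u hu).hom =
        η ≫ Functor.whiskerLeft u.toFunctor (s ≫ f).hom := by
      change f.hom ≫ toReindex u hu Y.obj = _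
      rw [toReindex_naturality, ← hη, ObjectProperty.FullSubcategory.comp_hom,
        Functor.whiskerLeft_comp, Category.assoc]
    exact ⟨Y.reindex u hu, Y.toReindex u hu, evtInv_toReindex u hu Y,
      ObjectProperty.hom_ext _ (by rw [hf, hf, hsf])⟩

end SeqCompletion
end

section
/- Let C be a category and X, Y : ℕ → C functors. Given a morphism (natural transformation) φ : X̃ → Ỹ between the induced functors C^op → Set, there exists a cofinal functor f : ℕ → ℕ (i.e. a monotone map with n ≤ f(n) for all n) and a morphism α : X → Y∘f in Fun(ℕ, C) such that the composite of φ with the canonical morphism Ỹ → (Y∘f)~ equals the morphism α̃ induced by α. -/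
/-!
STATEMENT 1: Given functors `X Y : ℕ ⥤ C` and a morphism `φ : X̃ ⟶ Ỹ` between the
induced functors `Cᵒᵖ ⥤ Type` (where `X̃ = colim_i Hom(-, X i)`), there is a cofinal
monotone map `f : ℕ → ℕ` and a morphism `α : X ⟶ Y ∘ f` such that the composite of `φ`
with the canonical morphism `Ỹ ⟶ (Y ∘ f)~` equals `α̃`.
-/

open CategoryTheory CategoryTheory.Limits

universe v u

namespace SeqCompletion

variable {C : Type u} [Category.{v} C]

/-- The canonical morphism `X ⟶ X ∘ f` for a cofinal monotone map `f : ℕ → ℕ`. -/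
def toCofinal (X : ℕ ⥤ C) {f : ℕ → ℕ} (hm : Monotone f) (hc : ∀ n, n ≤ f n) :
    X ⟶ hm.functor ⋙ X where
  app i := X.map (homOfLE (hc i))
  naturality := by
    intro i j g
    dsimp [Monotone.functor]
    rw [← X.map_comp, ← X.map_comp]
    congr 1


open Opposite in
lemma myrepr (Y : ℕ ⥤ C) (A : C) (ψ : yoneda.obj A ⟶ colimit (Y ⋙ yoneda)) :
    ∃ (m : ℕ) (g : A ⟶ Y.obj m), ψ = yoneda.map g ≫ colimit.ι (Y ⋙ yoneda) m := by
  obtain ⟨m, g, hg⟩ := Types.jointly_surjective'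
    ((colimitObjIsoColimitCompEvaluation (Y ⋙ yoneda) (op A)).hom (yonedaEquiv ψ))
  refine ⟨m, g, yonedaEquiv.injective ?_⟩
  rw [yonedaEquiv_comp, yonedaEquiv_yoneda_map]
  apply_fun (colimitObjIsoColimitCompEvaluation (Y ⋙ yoneda) (op A)).hom using
    (by intro a b h
        simpa using congrArg (colimitObjIsoColimitCompEvaluation (Y ⋙ yoneda) (op A)).inv h)
  rw [← hg]
  exact types_congr_hom (colimitObjIsoColimitCompEvaluation_ι_app_hom (Y ⋙ yoneda) m (op A)) g |>.symm

open Opposite in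
lemma eqstage (Y : ℕ ⥤ C) (A : C) {i j : ℕ} (a : A ⟶ Y.obj i) (b : A ⟶ Y.obj j)
    (h : yoneda.map a ≫ colimit.ι (Y ⋙ yoneda) i = yoneda.map b ≫ colimit.ι (Y ⋙ yoneda) j) :
    ∃ (k : ℕ) (h1 : i ≤ k) (h2 : j ≤ k),
      a ≫ Y.map (homOfLE h1) = b ≫ Y.map (homOfLE h2) := by
  have h' := congrArg yonedaEquiv h
  rw [yonedaEquiv_comp, yonedaEquiv_comp, yonedaEquiv_yoneda_map, yonedaEquiv_yoneda_map] at h'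
  have h'' := congrArg (colimitObjIsoColimitCompEvaluation (Y ⋙ yoneda) (op A)).hom h'
  have e1 := types_congr_hom (colimitObjIsoColimitCompEvaluation_ι_app_hom (Y ⋙ yoneda) i (op A)) a
  have e2 := types_congr_hom (colimitObjIsoColimitCompEvaluation_ι_app_hom (Y ⋙ yoneda) j (op A)) b
  simp only [types_comp_apply] at e1 e2
  rw [e1, e2] at h''
  rw [Types.FilteredColimit.colimit_eq_iff] at h''
  obtain ⟨k, f1, f2, hk⟩ := h''
  exact ⟨k, leOfHom f1, leOfHom f2, hk⟩

theorem exists_cofinal_lift (X Y : ℕ ⥤ C)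
    (φ : colimit (X ⋙ yoneda) ⟶ colimit (Y ⋙ yoneda)) :
    ∃ (f : ℕ → ℕ) (hm : Monotone f) (hc : ∀ n, n ≤ f n) (α : X ⟶ hm.functor ⋙ Y),
      φ ≫ colimMap (Functor.whiskerRight (toCofinal Y hm hc) yoneda) =
        colimMap (Functor.whiskerRight α yoneda) := by
  -- Step 1: represent each component of φ
  have hrep : ∀ n : ℕ, ∃ (m : ℕ) (g : X.obj n ⟶ Y.obj m),
      colimit.ι (X ⋙ yoneda) n ≫ φ = yoneda.map g ≫ colimit.ι (Y ⋙ yoneda) m :=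
    fun n => myrepr Y (X.obj n) (colimit.ι (X ⋙ yoneda) n ≫ φ)
  choose m g hg using hrep
  -- Step 2: consecutive compatibility
  have hcompat : ∀ n : ℕ, ∃ (k : ℕ) (h1 : m n ≤ k) (h2 : m (n + 1) ≤ k),
      g n ≫ Y.map (homOfLE h1) =
        (X.map (homOfLE (n.le_add_right 1)) ≫ g (n + 1)) ≫ Y.map (homOfLE h2) := by
    intro n
    apply eqstage
    rw [yoneda.map_comp, Category.assoc, ← hg (n + 1), ← hg n]
    rw [← Category.assoc]
    congr 1
    exact (colimit.w (X ⋙ yoneda) (homOfLE (n.le_add_right 1))).symm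
  choose k hk1 hk2 hk using hcompat
  -- Step 3: define the cofinal map f
  set f : ℕ → ℕ := fun n => Nat.rec (m 0) (fun n fn => max (max (k n) (fn + 1)) (m (n + 1))) n
    with hf
  have hsucc : ∀ n, f (n + 1) = max (max (k n) (f n + 1)) (m (n + 1)) := fun n => rfl
  have hfm : ∀ n, m n ≤ f n := by
    intro n
    cases n with
    | zero => exact le_refl _
    | succ n => rw [hsucc]; omega
  have hfk : ∀ n, k n ≤ f (n + 1) := by intro n; rw [hsucc]; omega
  have hflt : ∀ n, f n < f (n + 1) := by intro n; rw [hsucc]; omega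
  have hm : Monotone f := monotone_nat_of_le_succ (fun n => (hflt n).le)
  have hc : ∀ n, n ≤ f n := by
    intro n
    induction n with
    | zero => exact Nat.zero_le _
    | succ n ih => exact Nat.lt_of_le_of_lt ih (hflt n)
  -- Stability of the compatibility at later stages
  have hkstab : ∀ (n k' : ℕ) (h : k n ≤ k'),
      g n ≫ Y.map (homOfLE ((hk1 n).trans h)) =
        X.map (homOfLE (n.le_add_right 1)) ≫ g (n + 1) ≫ Y.map (homOfLE ((hk2 n).trans h)) := by
    intro n k' h
    have := congrArg (· ≫ Y.map (homOfLE h)) (hk n)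
    simpa only [Category.assoc, ← Y.map_comp, homOfLE_comp] using this
  -- Step 4: the natural transformation
  let α : X ⟶ hm.functor ⋙ Y := NatTrans.ofSequence
    (app := fun n => g n ≫ Y.map (homOfLE (hfm n)))
    (naturality := by
      intro n
      have h1 := hkstab n (f (n + 1)) (hfk n)
      dsimp [Monotone.functor]
      rw [Category.assoc, ← Y.map_comp, homOfLE_comp, ← Category.assoc, h1]
      simp only [Category.assoc, ← Y.map_comp, homOfLE_comp])
  refine ⟨f, hm, hc, α, ?_⟩
  -- Step 5: the equation
  apply colimit.hom_ext
  intro j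
  rw [← Category.assoc, hg j, Category.assoc, ι_colimMap, ι_colimMap]
  rw [Functor.whiskerRight_app, Functor.whiskerRight_app]
  have hα : α.app j = g j ≫ Y.map (homOfLE (hfm j)) := rfl
  rw [hα]
  have hw1 := colimit.w ((hm.functor ⋙ Y) ⋙ yoneda) (homOfLE (le_max_left (m j) j))
  have hw2 := colimit.w ((hm.functor ⋙ Y) ⋙ yoneda) (homOfLE (le_max_right (m j) j))
  rw [← hw1, ← hw2]
  dsimp [toCofinal, Monotone.functor]
  simp only [← Functor.map_comp_assoc]
  congr 1
  simp only [Category.assoc, ← Functor.map_comp, homOfLE_comp]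

end SeqCompletion
end

section
/- Let C be a category and X, Y : ℕ → C functors. If α, β : X → Y are morphisms in Fun(ℕ, C) inducing the same morphism α̃ = β̃ : X̃ → Ỹ of functors C^op → Set, then there exists a cofinal functor f : ℕ → ℕ (i.e. a monotone map with n ≤ f(n) for all n) such that the composites of α and β with the canonical morphism f_Y : Y → Y∘f are equal. -/
/-!
STATEMENT 2: Given functors `X Y : ℕ ⥤ C` and morphisms `α β : X ⟶ Y` inducing the same
morphism `X̃ ⟶ Ỹ` of functors `Cᵒᵖ ⥤ Type` (where `X̃ = colim_i Hom(-, X i)`), there is a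
cofinal monotone map `f : ℕ → ℕ` such that the composites of `α` and `β` with the
canonical morphism `f_Y : Y ⟶ Y ∘ f` agree.
-/

open CategoryTheory CategoryTheory.Limits

universe v u

namespace SeqCompletion

variable {C : Type u} [Category.{v} C]

/-- Auxiliary: pointwise coequalization. If `α` and `β` induce the same map on the
colimit of the Yoneda diagram, then for each `n` the components `α.app n` and `β.app n`
agree after pushing forward to some later stage. -/
theorem key (X Y : ℕ ⥤ C) (α β : X ⟶ Y)
    (h : colimMap (Functor.whiskerRight α yoneda) = colimMap (Functor.whiskerRight β yoneda)) (n : ℕ) :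
    ∃ m, ∃ hnm : n ≤ m,
      α.app n ≫ Y.map (homOfLE hnm) = β.app n ≫ Y.map (homOfLE hnm) := by
  have h1 : colimit.ι (X ⋙ yoneda) n ≫ colimMap (Functor.whiskerRight α yoneda)
      = colimit.ι (X ⋙ yoneda) n ≫ colimMap (Functor.whiskerRight β yoneda) := by rw [h]
  rw [ι_colimMap, ι_colimMap] at h1
  have h2 := CategoryTheory.congr_fun (NatTrans.congr_app h1 (Opposite.op (X.obj n))) (𝟙 (X.obj n))
  simp only [FunctorToTypes.comp] at h2
  have h3 : (colimit.ι (Y ⋙ yoneda) n).app (Opposite.op (X.obj n)) (α.app n)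
      = (colimit.ι (Y ⋙ yoneda) n).app (Opposite.op (X.obj n)) (β.app n) := by
    simpa using h2
  set G := (Y ⋙ yoneda) ⋙ (evaluation _ _).obj (Opposite.op (X.obj n)) with hG
  have h4 : colimit.ι G n (α.app n) = colimit.ι G n (β.app n) := by
    have e := colimitObjIsoColimitCompEvaluation_ι_app_hom (Y ⋙ yoneda)
      n (Opposite.op (X.obj n))
    have h5 := congrArg ((colimitObjIsoColimitCompEvaluation (Y ⋙ yoneda)
      (Opposite.op (X.obj n))).hom) h3
    rwa [← types_comp_apply ((colimit.ι (Y ⋙ yoneda) n).app _)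
        ((colimitObjIsoColimitCompEvaluation (Y ⋙ yoneda) (Opposite.op (X.obj n))).hom)
        (α.app n),
      ← types_comp_apply ((colimit.ι (Y ⋙ yoneda) n).app _)
        ((colimitObjIsoColimitCompEvaluation (Y ⋙ yoneda) (Opposite.op (X.obj n))).hom)
        (β.app n), e] at h5
  rw [Types.FilteredColimit.colimit_eq_iff] at h4
  obtain ⟨k, f, g, hk⟩ := h4
  refine ⟨k, f.le, ?_⟩
  obtain rfl : f = g := Subsingleton.elim f g
  exact hk

theorem exists_cofinal_coequalize (X Y : ℕ ⥤ C) (α β : X ⟶ Y)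
    (h : colimMap (Functor.whiskerRight α yoneda) = colimMap (Functor.whiskerRight β yoneda)) :
    ∃ (f : ℕ → ℕ) (hm : Monotone f) (hc : ∀ n, n ≤ f n),
      α ≫ toCofinal Y hm hc = β ≫ toCofinal Y hm hc := by
  choose g hg hgeq using key X Y α β h
  set f : ℕ → ℕ := fun n => max n ((Finset.range (n + 1)).sup g) with hf
  have hm : Monotone f := by
    intro a b hab
    exact max_le_max hab (Finset.sup_mono (by
      intro x hx
      simp only [Finset.mem_range] at hx ⊢
      omega))
  have hc : ∀ n, n ≤ f n := fun n => le_max_left _ _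
  have hgf : ∀ n, g n ≤ f n := fun n =>
    le_trans (Finset.le_sup (Finset.mem_range.mpr (Nat.lt_succ_self n))) (le_max_right _ _)
  refine ⟨f, hm, hc, ?_⟩
  ext n
  simp only [NatTrans.comp_app, toCofinal]
  have : (homOfLE (hc n) : n ⟶ f n) = homOfLE (hg n) ≫ homOfLE (hgf n) := rfl
  erw [this]
  erw [Y.map_comp]
  rw [← Category.assoc, ← Category.assoc, hgeq n]

end SeqCompletion
end

section
/- Let C be a category and let Ĉ = Cauch(ℕ, C)[S⁻¹] be its sequential completion. The canonical functor Ĉ → Fun(C^op, Set) sending a Cauchy sequence X to X̃ = colim_i Hom(−, X_i) is fully faithful; its essential image consists precisely of the colimits in Fun(C^op, Set) of sequences of representable functors Hom(−, X₀) → Hom(−, X₁) → ⋯ corresponding to Cauchy sequences in C. -/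
/-!
STATEMENT 3: The canonical functor from the sequential completion
`Ĉ = Cauch(ℕ, C)[S⁻¹]` to `Fun(Cᵒᵖ, Set)` sending a Cauchy sequence `X` to
`X̃ = colim_i Hom(-, X i)` is fully faithful, and its essential image consists exactly of
the colimits of sequences of representable functors corresponding to Cauchy sequences.
-/

open CategoryTheory CategoryTheory.Limits

universe v u

namespace SeqCompletion

variable (C : Type u) [Category.{v} C]

/-- The sequential completion `Ĉ = Cauch(ℕ, C)[S⁻¹]`. -/
abbrev Shat := (evtInv C).Localization

/-- The functor sending a Cauchy sequence `X` to `X̃ = colim_i Hom(-, X i)`. -/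
noncomputable def tildeFunctor : CauchCat C ⥤ (Cᵒᵖ ⥤ Type v) :=
  ObjectProperty.ι _ ⋙
    (Functor.whiskeringRight ℕ C (Cᵒᵖ ⥤ Type v)).obj yoneda ⋙ colim

section Development

variable {C}

/-! ### Helpers -/

lemma nat_map_eq (F : ℕ ⥤ C) {i j : ℕ} (f : i ⟶ j) (h : i ≤ j) :
    F.map f = F.map (homOfLE h) := congrArg F.map (Subsingleton.elim _ _)

lemma nat_map_comp (F : ℕ ⥤ C) {i j k : ℕ} (h₁ : i ≤ j) (h₂ : j ≤ k) :
    F.map (homOfLE h₁) ≫ F.map (homOfLE h₂) = F.map (homOfLE (h₁.trans h₂)) := by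
  rw [← F.map_comp]; exact congrArg F.map (Subsingleton.elim _ _)

lemma exists_mono (k : ℕ → ℕ) :
    ∃ ν : ℕ → ℕ, Monotone ν ∧ (∀ i, i ≤ ν i) ∧ (∀ i, k i ≤ ν i) := by
  refine ⟨fun i => i + (Finset.range (i + 1)).sup k, fun a b hab => ?_, fun i => Nat.le_add_right _ _,
    fun i => le_trans (Finset.le_sup (f := k) (Finset.mem_range.2 (Nat.lt_succ_self i)))
      (Nat.le_add_left _ _)⟩
  exact add_le_add hab (Finset.sup_mono (Finset.range_subset_range.2 (by omega)))

/-- rephrase of the evtInv condition without the inclusion functor -/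
lemma evtInv_iff {X Y : CauchCat C} (φ : X ⟶ Y) :
    evtInv C φ ↔ ∀ C' : C, ∃ n : ℕ, ∀ i : ℕ, n ≤ i →
      Function.Bijective (fun g : C' ⟶ X.obj.obj i => g ≫ φ.hom.app i) := Iff.rfl

/-! ### Subsequences -/

def sub (X : CauchCat C) {ν : ℕ → ℕ} (hν : Monotone ν) (hle : ∀ i, i ≤ ν i) : CauchCat C :=
  ⟨hν.functor ⋙ X.obj, by
    intro C'
    obtain ⟨n, hn⟩ := X.property C'
    refine ⟨n, fun i j hi hij => ?_⟩
    show Function.Bijective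
      (fun g : C' ⟶ X.obj.obj (ν i) => g ≫ X.obj.map (hν.functor.map (homOfLE hij)))
    exact hn (ν i) (ν j) (hi.trans (hle i)) (hν hij)⟩

def toSub (X : CauchCat C) {ν : ℕ → ℕ} (hν : Monotone ν) (hle : ∀ i, i ≤ ν i) :
    X ⟶ sub X hν hle := ObjectProperty.homMk {
  app i := X.obj.map (homOfLE (hle i))
  naturality i j f := by
    show X.obj.map f ≫ X.obj.map (homOfLE (hle j)) =
      X.obj.map (homOfLE (hle i)) ≫ X.obj.map (homOfLE (hν (leOfHom f)))
    rw [nat_map_eq X.obj f (leOfHom f),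
      nat_map_comp, nat_map_comp] }

lemma toSub_mem (X : CauchCat C) {ν : ℕ → ℕ} (hν : Monotone ν) (hle : ∀ i, i ≤ ν i) :
    evtInv C (toSub X hν hle) := by
  intro C'
  obtain ⟨n, hn⟩ := X.property C'
  exact ⟨n, fun i hi => hn i (ν i) hi (hle i)⟩

/-! ### Calculus of fractions -/

instance : (evtInv C).ContainsIdentities := by
  constructor
  intro X C'
  refine ⟨0, fun i _ => ?_⟩
  show Function.Bijective (fun g : C' ⟶ X.obj.obj i => g ≫ (𝟙 X.obj : X.obj ⟶ X.obj).app i)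
  simp; exact Function.bijective_id

instance inst_s3 : (evtInv C).IsMultiplicative := by
  refine { comp_mem := ?_ }
  intro X Y Z f g hf hg C'
  obtain ⟨m, hm⟩ := hf C'
  obtain ⟨n, hn⟩ := hg C'
  refine ⟨max m n, fun i hi => ?_⟩
  show Function.Bijective (fun x : C' ⟶ X.obj.obj i => x ≫ (f ≫ g).hom.app i)
  have : (fun x : C' ⟶ X.obj.obj i => x ≫ (f ≫ g).hom.app i) =
      (fun y : C' ⟶ Y.obj.obj i => y ≫ g.hom.app i) ∘ (fun x => x ≫ f.hom.app i) := by
    funext x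
    show x ≫ (f.hom.app i ≫ g.hom.app i) = (x ≫ f.hom.app i) ≫ g.hom.app i
    rw [Category.assoc]
  rw [this]
  exact (hn i (le_trans (le_max_right m n) hi)).comp (hm i (le_trans (le_max_left m n) hi))

lemma exists_lift {Z X : CauchCat C} (s : Z ⟶ X) (hs : evtInv C s) :
    ∃ (ν : ℕ → ℕ) (hν : Monotone ν) (hle : ∀ i, i ≤ ν i) (g : X ⟶ sub Z hν hle),
      (∀ i, s.hom.app i ≫ g.hom.app i = Z.obj.map (homOfLE (hle i))) ∧
      (∀ i, g.hom.app i ≫ s.hom.app (ν i) = X.obj.map (homOfLE (hle i))) := by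
  choose a ha using fun i => hs (X.obj.obj i)
  choose b hb using fun i => hs (Z.obj.obj i)
  obtain ⟨ν, hν, hle, hk⟩ := exists_mono (fun i => max (a i) (b i))
  have hai : ∀ i, a i ≤ ν i := fun i => le_trans (le_max_left _ _) (hk i)
  have hbi : ∀ i, b i ≤ ν i := fun i => le_trans (le_max_right _ _) (hk i)
  -- the lift at each level
  have hgex : ∀ i, ∃ g : X.obj.obj i ⟶ Z.obj.obj (ν i),
      g ≫ s.hom.app (ν i) = X.obj.map (homOfLE (hle i)) :=
    fun i => (ha i (ν i) (hai i)).2 (X.obj.map (homOfLE (hle i)))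
  choose g hg using hgex
  have hnat : ∀ (i j : ℕ) (f : i ⟶ j),
      X.obj.map f ≫ g j = g i ≫ Z.obj.map (homOfLE (hν (leOfHom f))) := by
    intro i j f
    apply (ha i (ν j) (le_trans (hai i) (hν (leOfHom f)))).1
    show (X.obj.map f ≫ g j) ≫ s.hom.app (ν j) = (g i ≫ Z.obj.map (homOfLE (hν (leOfHom f)))) ≫ s.hom.app (ν j)
    rw [Category.assoc, hg j, Category.assoc, s.hom.naturality (homOfLE (hν (leOfHom f))), ← Category.assoc,
      hg i, nat_map_eq X.obj f (leOfHom f), nat_map_comp, nat_map_comp]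
  refine ⟨ν, hν, hle, ⟨fun i => g i, ?_⟩, ?_, hg⟩
  · intro i j f
    show X.obj.map f ≫ g j = g i ≫ Z.obj.map (hν.functor.map f)
    exact hnat i j f
  · intro i
    apply (hb i (ν i) (hbi i)).1
    show (s.hom.app i ≫ g i) ≫ s.hom.app (ν i) = Z.obj.map (homOfLE (hle i)) ≫ s.hom.app (ν i)
    rw [Category.assoc, hg i, ← s.hom.naturality (homOfLE (hle i))]

instance : (evtInv C).HasLeftCalculusOfFractions := by
  constructor
  · intro X Y φ
    obtain ⟨ν, hν, hle, g, hg1, _⟩ := exists_lift φ.s φ.hs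
    refine ⟨⟨g ≫ ObjectProperty.homMk (X := sub _ hν hle) (Y := sub Y hν hle) (Functor.whiskerLeft hν.functor φ.f.hom), toSub Y hν hle, toSub_mem Y hν hle⟩, ?_⟩
    apply InducedCategory.hom_ext; apply NatTrans.ext; funext i
    show φ.f.hom.app i ≫ Y.obj.map (homOfLE (hle i)) = φ.s.hom.app i ≫ (g.hom.app i ≫ φ.f.hom.app (ν i))
    exact ((φ.f.hom.naturality (homOfLE (hle i))).symm.trans
      (congrArg (· ≫ φ.f.hom.app (ν i)) (hg1 i)).symm).trans (Category.assoc _ _ _)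
  · intro X' X Y f₁ f₂ s hs hsf
    choose a ha using fun i => hs (X.obj.obj i)
    obtain ⟨ν, hν, hle, hk⟩ := exists_mono a
    refine ⟨sub Y hν hle, toSub Y hν hle, toSub_mem Y hν hle, ?_⟩
    apply InducedCategory.hom_ext; apply NatTrans.ext; funext i
    show f₁.hom.app i ≫ Y.obj.map (homOfLE (hle i)) = f₂.hom.app i ≫ Y.obj.map (homOfLE (hle i))
    obtain ⟨h, hh⟩ := (ha i (ν i) (hk i)).2 (X.obj.map (homOfLE (hle i)))
    have e1 : f₁.hom.app i ≫ Y.obj.map (homOfLE (hle i)) = h ≫ (s ≫ f₁).hom.app (ν i) := by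
      rw [← f₁.hom.naturality (homOfLE (hle i)), ← hh]
      simp only [Category.assoc]; rfl
    have e2 : f₂.hom.app i ≫ Y.obj.map (homOfLE (hle i)) = h ≫ (s ≫ f₂).hom.app (ν i) := by
      rw [← f₂.hom.naturality (homOfLE (hle i)), ← hh]
      simp only [Category.assoc]; rfl
    rw [e1, e2, hsf]

/-! ### Elements of the colimit presheaf -/

noncomputable def cls (X : CauchCat C) {C' : C} (i : ℕ) (f : C' ⟶ X.obj.obj i) :
    (colimit (X.obj ⋙ yoneda)).obj (Opposite.op C') :=
  (colimit.ι (X.obj ⋙ yoneda) i).app (Opposite.op C') f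

lemma cls_w (X : CauchCat C) {C' : C} {i j : ℕ} (h : i ≤ j) (f : C' ⟶ X.obj.obj i) :
    cls X j (f ≫ X.obj.map (homOfLE h)) = cls X i f := by
  have := ConcreteCategory.congr_hom (NatTrans.congr_app
    (colimit.w (X.obj ⋙ yoneda) (homOfLE h)) (Opposite.op C')) f
  exact this

lemma cls_surjective (X : CauchCat C) {C' : C}
    (x : (colimit (X.obj ⋙ yoneda)).obj (Opposite.op C')) :
    ∃ (i : ℕ) (f : C' ⟶ X.obj.obj i), cls X i f = x := by
  set e := colimitObjIsoColimitCompEvaluation (X.obj ⋙ yoneda) (Opposite.op C') with he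
  obtain ⟨i, y, hy⟩ := Types.jointly_surjective'
    (F := (X.obj ⋙ yoneda) ⋙ (evaluation Cᵒᵖ (Type v)).obj (Opposite.op C')) (e.hom x)
  refine ⟨i, y, ?_⟩
  have h2 := ConcreteCategory.congr_hom (colimitObjIsoColimitCompEvaluation_ι_app_hom
    (X.obj ⋙ yoneda) i (Opposite.op C')) y
  -- h2 : e.hom (cls X i y) = colimit.ι _ i y
  have : e.hom (cls X i y) = e.hom x := by
    rw [h2.symm] at hy
    exact hy
  have := congrArg e.inv this
  simpa [he] using this

lemma cls_eq {X : CauchCat C} {C' : C} {i j : ℕ} {f : C' ⟶ X.obj.obj i}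
    {g : C' ⟶ X.obj.obj j} (h : cls X i f = cls X j g) :
    ∃ (k : ℕ) (hik : i ≤ k) (hjk : j ≤ k),
      f ≫ X.obj.map (homOfLE hik) = g ≫ X.obj.map (homOfLE hjk) := by
  set e := colimitObjIsoColimitCompEvaluation (X.obj ⋙ yoneda) (Opposite.op C')
  have h1 := ConcreteCategory.congr_hom (colimitObjIsoColimitCompEvaluation_ι_app_hom
    (X.obj ⋙ yoneda) i (Opposite.op C')) f
  have h2 := ConcreteCategory.congr_hom (colimitObjIsoColimitCompEvaluation_ι_app_hom
    (X.obj ⋙ yoneda) j (Opposite.op C')) g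
  have : colimit.ι ((X.obj ⋙ yoneda) ⋙ (evaluation Cᵒᵖ (Type v)).obj (Opposite.op C')) i f =
      colimit.ι ((X.obj ⋙ yoneda) ⋙ (evaluation Cᵒᵖ (Type v)).obj (Opposite.op C')) j g := by
    rw [← h1, ← h2]
    exact congrArg e.hom h
  rw [Types.FilteredColimit.colimit_eq_iff] at this
  obtain ⟨k, p, q, hpq⟩ := this
  refine ⟨k, leOfHom p, leOfHom q, ?_⟩
  have ep : ((X.obj ⋙ yoneda) ⋙ (evaluation Cᵒᵖ (Type v)).obj (Opposite.op C')).map p f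
      = f ≫ X.obj.map (homOfLE (leOfHom p)) := by
    rw [nat_map_eq ((X.obj ⋙ yoneda) ⋙ (evaluation Cᵒᵖ (Type v)).obj (Opposite.op C'))
      p (leOfHom p)]
    rfl
  have eq : ((X.obj ⋙ yoneda) ⋙ (evaluation Cᵒᵖ (Type v)).obj (Opposite.op C')).map q g
      = g ≫ X.obj.map (homOfLE (leOfHom q)) := by
    rw [nat_map_eq ((X.obj ⋙ yoneda) ⋙ (evaluation Cᵒᵖ (Type v)).obj (Opposite.op C'))
      q (leOfHom q)]
    rfl
  rw [ep, eq] at hpq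
  exact hpq

lemma tilde_map_eq {X Y : CauchCat C} (φ : X ⟶ Y) :
    (tildeFunctor C).map φ = colimMap (Functor.whiskerRight φ.hom yoneda) := rfl

lemma cls_map {X Y : CauchCat C} (φ : X ⟶ Y) {C' : C} (i : ℕ) (f : C' ⟶ X.obj.obj i) :
    ((tildeFunctor C).map φ).app (Opposite.op C') (cls X i f) = cls Y i (f ≫ φ.hom.app i) := by
  rw [tilde_map_eq]
  exact ConcreteCategory.congr_hom (NatTrans.congr_app
    (ι_colimMap (Functor.whiskerRight φ.hom yoneda) i) (Opposite.op C')) f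

lemma cls_precomp (X : CauchCat C) {C' C'' : C} (h : C'' ⟶ C') (i : ℕ) (f : C' ⟶ X.obj.obj i) :
    (colimit (X.obj ⋙ yoneda)).map h.op (cls X i f) = cls X i (h ≫ f) :=
  (NatTrans.naturality_apply (colimit.ι (X.obj ⋙ yoneda) i) h.op f).symm

lemma tilde_inverts : (evtInv C).IsInvertedBy (tildeFunctor C) := by
  intro X Y φ hφ
  have : ∀ c : Cᵒᵖ, IsIso (((tildeFunctor C).map φ).app c) := by
    intro c
    obtain ⟨C'⟩ := c
    rw [isIso_iff_bijective]
    obtain ⟨n, hn⟩ := hφ C'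
    constructor
    · intro x y hxy
      obtain ⟨i, f, rfl⟩ := cls_surjective X x
      obtain ⟨j, g, rfl⟩ := cls_surjective X y
      rw [cls_map, cls_map] at hxy
      obtain ⟨k, hik, hjk, hk⟩ := cls_eq hxy
      have h1 : (f ≫ X.obj.map (homOfLE (hik.trans (le_max_left k n)))) ≫ φ.hom.app (max k n) =
          (g ≫ X.obj.map (homOfLE (hjk.trans (le_max_left k n)))) ≫ φ.hom.app (max k n) := by
        rw [Category.assoc, Category.assoc, φ.hom.naturality (homOfLE (hik.trans (le_max_left k n))),
          φ.hom.naturality (homOfLE (hjk.trans (le_max_left k n))),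
          ← nat_map_comp Y.obj hik (le_max_left k n), ← nat_map_comp Y.obj hjk (le_max_left k n)]
        simp only [← Category.assoc]
        rw [hk]
      have h2 := (hn (max k n) (le_max_right k n)).1 h1
      rw [← cls_w X (hik.trans (le_max_left k n)) f, ← cls_w X (hjk.trans (le_max_left k n)) g, h2]
    · intro x
      obtain ⟨i, g, rfl⟩ := cls_surjective Y x
      obtain ⟨f, hf⟩ := (hn (max i n) (le_max_right i n)).2 (g ≫ Y.obj.map (homOfLE (le_max_left i n)))
      refine ⟨cls X (max i n) f, ?_⟩
      rw [cls_map]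
      have : f ≫ φ.hom.app (max i n) = g ≫ Y.obj.map (homOfLE (le_max_left i n)) := hf
      rw [this, cls_w Y (le_max_left i n) g]
  exact NatIso.isIso_of_isIso_app _

lemma sub_map (X : CauchCat C) {ν : ℕ → ℕ} (hν : Monotone ν) (hle : ∀ i, i ≤ ν i)
    {i j : ℕ} (h : i ≤ j) :
    (sub X hν hle).obj.map (homOfLE h) = X.obj.map (homOfLE (hν h)) :=
  nat_map_eq X.obj _ _

lemma tilde_map_cancel {X T : CauchCat C} (p q : X ⟶ T)
    (h : (tildeFunctor C).map p = (tildeFunctor C).map q) :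
    ∃ (T' : CauchCat C) (w : T ⟶ T'), evtInv C w ∧ p ≫ w = q ≫ w := by
  have hpt : ∀ i, cls T i (p.hom.app i) = cls T i (q.hom.app i) := by
    intro i
    have := ConcreteCategory.congr_hom (NatTrans.congr_app h (Opposite.op (X.obj.obj i))) (cls X i (𝟙 _))
    rw [cls_map, cls_map, Category.id_comp, Category.id_comp] at this
    exact this
  choose k hk1 hk2 hkeq using fun i => cls_eq (hpt i)
  obtain ⟨ν, hν, hle, hb⟩ := exists_mono k
  refine ⟨sub T hν hle, toSub T hν hle, toSub_mem T hν hle, ?_⟩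
  apply InducedCategory.hom_ext; apply NatTrans.ext; funext i
  show p.hom.app i ≫ T.obj.map (homOfLE (hle i)) = q.hom.app i ≫ T.obj.map (homOfLE (hle i))
  have e1 : T.obj.map (homOfLE (hle i)) =
      T.obj.map (homOfLE (hk1 i)) ≫ T.obj.map (homOfLE (hb i)) := by
    rw [nat_map_comp]
  rw [e1, ← Category.assoc, ← Category.assoc, hkeq i]

lemma exists_fraction_of_hom (X Y : CauchCat C)
    (t : (tildeFunctor C).obj X ⟶ (tildeFunctor C).obj Y) :
    ∃ φ : (evtInv C).LeftFraction X Y, φ.map (tildeFunctor C) tilde_inverts = t := by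
  set u : ∀ i : ℕ, (colimit (Y.obj ⋙ yoneda)).obj (Opposite.op (X.obj.obj i)) :=
    fun i => t.app (Opposite.op (X.obj.obj i)) (cls X i (𝟙 _)) with hu
  choose j g hg using fun i => cls_surjective Y (u i)
  choose a ha using fun i => Y.property (X.obj.obj i)
  obtain ⟨ν, hν, hle, hb⟩ := exists_mono (fun i => max (j i) (a i))
  have hji : ∀ i, j i ≤ ν i := fun i => le_trans (le_max_left _ _) (hb i)
  have hai : ∀ i, a i ≤ ν i := fun i => le_trans (le_max_right _ _) (hb i)
  have key : ∀ (p q : ℕ) (hpq : p ≤ q),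
      cls Y (j p) (g p) = cls Y (j q) (X.obj.map (homOfLE hpq) ≫ g q) := by
    intro p q hpq
    have e1 : cls X p (𝟙 _) =
        (colimit (X.obj ⋙ yoneda)).map (X.obj.map (homOfLE hpq)).op (cls X q (𝟙 _)) := by
      rw [cls_precomp, Category.comp_id]
      have := cls_w X hpq (𝟙 (X.obj.obj p))
      rw [Category.id_comp] at this
      exact this.symm
    have e2 := (NatTrans.naturality_apply t (X.obj.map (homOfLE hpq)).op (cls X q (𝟙 _)))
    calc cls Y (j p) (g p) = u p := hg p
      _ = (show (colimit (Y.obj ⋙ yoneda)).obj (Opposite.op (X.obj.obj p)) from t.app _ (cls X p (𝟙 _))) := rfl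
      _ = (show (colimit (Y.obj ⋙ yoneda)).obj (Opposite.op (X.obj.obj p)) from (colimit (Y.obj ⋙ yoneda)).map (X.obj.map (homOfLE hpq)).op (u q)) := by
            rw [e1]; exact e2
      _ = (show (colimit (Y.obj ⋙ yoneda)).obj (Opposite.op (X.obj.obj p)) from (colimit (Y.obj ⋙ yoneda)).map (X.obj.map (homOfLE hpq)).op
            (cls Y (j q) (g q))) := by rw [hg q]
      _ = cls Y (j q) (X.obj.map (homOfLE hpq) ≫ g q) := cls_precomp Y _ _ _
  have main : ∀ (p q : ℕ) (hpq : p ≤ q),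
      X.obj.map (homOfLE hpq) ≫ g q ≫ Y.obj.map (homOfLE (hji q)) =
        (g p ≫ Y.obj.map (homOfLE (hji p))) ≫ Y.obj.map (homOfLE (hν hpq)) := by
    intro p q hpq
    obtain ⟨k, hk1, hk2, hkeq⟩ := cls_eq (key p q hpq)
    have hKq : ν q ≤ max k (ν q) := le_max_right _ _
    apply (ha p (ν q) (max k (ν q)) (le_trans (hai p) (hν hpq)) hKq).1
    show (X.obj.map (homOfLE hpq) ≫ g q ≫ Y.obj.map (homOfLE (hji q))) ≫
        Y.obj.map (homOfLE hKq) =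
      ((g p ≫ Y.obj.map (homOfLE (hji p))) ≫ Y.obj.map (homOfLE (hν hpq))) ≫
        Y.obj.map (homOfLE hKq)
    have e := congrArg (· ≫ Y.obj.map (homOfLE (le_max_left k (ν q)))) hkeq
    simp only [Category.assoc] at e
    rw [nat_map_comp, nat_map_comp] at e
    simp only [Category.assoc]
    rw [nat_map_comp, nat_map_comp, nat_map_comp]
    exact e.symm
  refine ⟨⟨ObjectProperty.homMk (⟨fun i => g i ≫ Y.obj.map (homOfLE (hji i)), ?_⟩ :
      X.obj ⟶ (sub Y hν hle).obj), toSub Y hν hle, toSub_mem Y hν hle⟩, ?_⟩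
  · intro p q f
    have := main p q (leOfHom f)
    rw [nat_map_eq X.obj f (leOfHom f),
      nat_map_eq ((sub Y hν hle).obj) f (leOfHom f), sub_map Y hν hle (leOfHom f)]
    exact this
  · have hiso : IsIso ((tildeFunctor C).map (toSub Y hν hle)) :=
      tilde_inverts _ (toSub_mem Y hν hle)
    rw [← cancel_mono ((tildeFunctor C).map (toSub Y hν hle))]
    rw [MorphismProperty.LeftFraction.map_comp_map_s]
    apply NatTrans.ext; funext c
    obtain ⟨C'⟩ := c
    refine ConcreteCategory.hom_ext _ _ fun x => ?_
    obtain ⟨i, h, rfl⟩ := cls_surjective X x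
    have lhs : ((tildeFunctor C).map
        (⟨fun i => g i ≫ Y.obj.map (homOfLE (hji i)), by
          intro p q f
          have := main p q (leOfHom f)
          rw [nat_map_eq X.obj f (leOfHom f),
            nat_map_eq ((sub Y hν hle).obj) f (leOfHom f), sub_map Y hν hle (leOfHom f)]
          exact this⟩ : X ⟶ sub Y hν hle)).app (Opposite.op C') (cls X i h) =
        cls (sub Y hν hle) i (h ≫ (g i ≫ Y.obj.map (homOfLE (hji i)))) := cls_map _ i h
    refine lhs.trans ?_
    -- now compute the right hand side
    have e3 : cls X i h = (colimit (X.obj ⋙ yoneda)).map h.op (cls X i (𝟙 _)) := by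
      rw [cls_precomp, Category.comp_id]
    have e4 := (NatTrans.naturality_apply t h.op (cls X i (𝟙 _)))
    have e5 : t.app (Opposite.op C') (cls X i h) = cls Y (j i) (h ≫ g i) := by
      rw [e3]
      refine e4.trans ?_
      show (colimit (Y.obj ⋙ yoneda)).map h.op (u i) = _
      rw [← hg i]
      exact cls_precomp Y h (j i) (g i)
    have e6 : (t ≫ (tildeFunctor C).map (toSub Y hν hle)).app (Opposite.op C') (cls X i h) =
        cls (sub Y hν hle) (j i) ((h ≫ g i) ≫ Y.obj.map (homOfLE (hle (j i)))) := by
      show ((tildeFunctor C).map (toSub Y hν hle)).app (Opposite.op C')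
        (t.app (Opposite.op C') (cls X i h)) = _
      rw [e5]
      exact cls_map (toSub Y hν hle) (j i) (h ≫ g i)
    rw [e6]
    -- compare the two classes in the subsequence colimit
    have w1 := cls_w (sub Y hν hle) (le_max_left i (j i))
      (h ≫ (g i ≫ Y.obj.map (homOfLE (hji i))))
    have w2 := cls_w (sub Y hν hle) (le_max_right i (j i))
      ((h ≫ g i) ≫ Y.obj.map (homOfLE (hle (j i))))
    rw [← w1, ← w2]
    congr 1
    rw [sub_map Y hν hle (le_max_left i (j i)), sub_map Y hν hle (le_max_right i (j i))]
    show (h ≫ g i ≫ Y.obj.map (homOfLE (hji i))) ≫ Y.obj.map (homOfLE (hν (le_max_left i (j i)))) =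
      ((h ≫ g i) ≫ Y.obj.map (homOfLE (hle (j i)))) ≫ Y.obj.map (homOfLE (hν (le_max_right i (j i))))
    simp only [Category.assoc]
    rw [nat_map_comp, nat_map_comp]

lemma fraction_rel {X Y : CauchCat C} (φ ψ : (evtInv C).LeftFraction X Y)
    (h : φ.map (tildeFunctor C) tilde_inverts = ψ.map (tildeFunctor C) tilde_inverts) :
    MorphismProperty.LeftFractionRel φ ψ := by
  obtain ⟨ζ, hζ⟩ := (MorphismProperty.RightFraction.mk φ.s φ.hs ψ.s).exists_leftFraction
  have e : (tildeFunctor C).map (φ.f ≫ ζ.f) = (tildeFunctor C).map (ψ.f ≫ ζ.s) := by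
    have h1 : (tildeFunctor C).map (φ.f ≫ ζ.f) =
        φ.map (tildeFunctor C) tilde_inverts ≫ (tildeFunctor C).map (φ.s ≫ ζ.f) := by
      rw [Functor.map_comp, Functor.map_comp,
        MorphismProperty.LeftFraction.map_comp_map_s_assoc]
    have h2 : (tildeFunctor C).map (ψ.f ≫ ζ.s) =
        ψ.map (tildeFunctor C) tilde_inverts ≫ (tildeFunctor C).map (ψ.s ≫ ζ.s) := by
      rw [Functor.map_comp, Functor.map_comp,
        MorphismProperty.LeftFraction.map_comp_map_s_assoc]
    rw [h1, h2, h, hζ]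
  obtain ⟨T', w, hw, heq⟩ := tilde_map_cancel _ _ e
  have hcomm : φ.s ≫ ζ.f ≫ w = ψ.s ≫ ζ.s ≫ w := by
    rw [← Category.assoc, ← Category.assoc, ← hζ]
  refine ⟨T', ζ.f ≫ w, ζ.s ≫ w, hcomm, ?_, ?_⟩
  · rw [← Category.assoc, ← Category.assoc, heq]
  · rw [hcomm]
    exact (evtInv C).comp_mem _ _ ψ.hs ((evtInv C).comp_mem _ _ ζ.hs hw)

/-! ### Assembly -/

noncomputable def Fbar : Shat C ⥤ (Cᵒᵖ ⥤ Type v) :=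
  Localization.Construction.lift (tildeFunctor C) tilde_inverts

lemma Fbar_fac : (evtInv C).Q ⋙ (Fbar : Shat C ⥤ _) = tildeFunctor C :=
  Localization.Construction.fac _ _

lemma Fbar_obj (X : CauchCat C) :
    (Fbar : Shat C ⥤ _).obj ((evtInv C).Q.obj X) = (tildeFunctor C).obj X :=
  Functor.congr_obj Fbar_fac X

lemma Fbar_map_Q {A B : CauchCat C} (h : A ⟶ B) :
    (Fbar : Shat C ⥤ _).map ((evtInv C).Q.map h) =
      eqToHom (Fbar_obj A) ≫ (tildeFunctor C).map h ≫ eqToHom (Fbar_obj B).symm :=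
  Functor.congr_hom Fbar_fac h

lemma Fbar_map_fraction {X Y : CauchCat C} (φ : (evtInv C).LeftFraction X Y) :
    (Fbar : Shat C ⥤ _).map (φ.map (evtInv C).Q (Localization.inverts _ _)) =
      eqToHom (Fbar_obj X) ≫ φ.map (tildeFunctor C) tilde_inverts ≫
        eqToHom (Fbar_obj Y).symm := by
  have h1 : IsIso ((evtInv C).Q.map φ.s) := Localization.inverts _ (evtInv C) φ.s φ.hs
  have h2 : IsIso ((Fbar : Shat C ⥤ _).map ((evtInv C).Q.map φ.s)) := inferInstance
  rw [← cancel_mono ((Fbar : Shat C ⥤ _).map ((evtInv C).Q.map φ.s)), ← Functor.map_comp,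
    MorphismProperty.LeftFraction.map_comp_map_s, Fbar_map_Q, Fbar_map_Q]
  simp [MorphismProperty.LeftFraction.map_comp_map_s_assoc,
    MorphismProperty.LeftFraction.map_comp_map_s]

lemma Fbar_bij (X Y : CauchCat C) :
    Function.Bijective (fun f : (evtInv C).Q.obj X ⟶ (evtInv C).Q.obj Y =>
      (Fbar : Shat C ⥤ _).map f) := by
  constructor
  · intro f g hfg
    obtain ⟨φ, rfl⟩ := Localization.exists_leftFraction (evtInv C).Q (evtInv C) f
    obtain ⟨ψ, rfl⟩ := Localization.exists_leftFraction (evtInv C).Q (evtInv C) g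
    simp only [Fbar_map_fraction] at hfg
    rw [cancel_epi, cancel_mono] at hfg
    exact (MorphismProperty.LeftFraction.map_eq_iff (evtInv C).Q (evtInv C) φ ψ).2
      (fraction_rel φ ψ hfg)
  · intro t
    obtain ⟨φ, hφ⟩ := exists_fraction_of_hom X Y
      (eqToHom (Fbar_obj X).symm ≫ t ≫ eqToHom (Fbar_obj Y))
    refine ⟨φ.map (evtInv C).Q (Localization.inverts _ _), ?_⟩
    show (Fbar : Shat C ⥤ _).map (φ.map (evtInv C).Q (Localization.inverts _ _)) = t
    rw [Fbar_map_fraction, hφ]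
    simp

lemma Fbar_faithful : (Fbar : Shat C ⥤ _).Faithful := by
  haveI : ((evtInv C).Q).EssSurj := Localization.essSurj (L := (evtInv C).Q) (evtInv C)
  constructor
  intro A B f g h
  let eA := ((evtInv C).Q).objObjPreimageIso A
  let eB := ((evtInv C).Q).objObjPreimageIso B
  have : (Fbar : Shat C ⥤ _).map (eA.hom ≫ f ≫ eB.inv) =
      (Fbar : Shat C ⥤ _).map (eA.hom ≫ g ≫ eB.inv) := by
    rw [Functor.map_comp, Functor.map_comp, Functor.map_comp, Functor.map_comp, h]
  have := (Fbar_bij _ _).1 this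
  rwa [cancel_epi, cancel_mono] at this

lemma Fbar_full : (Fbar : Shat C ⥤ _).Full := by
  haveI : ((evtInv C).Q).EssSurj := Localization.essSurj (L := (evtInv C).Q) (evtInv C)
  constructor
  intro A B t
  let eA := ((evtInv C).Q).objObjPreimageIso A
  let eB := ((evtInv C).Q).objObjPreimageIso B
  obtain ⟨f, hf⟩ := (Fbar_bij _ _).2
    ((Fbar : Shat C ⥤ _).map eA.hom ≫ t ≫ (Fbar : Shat C ⥤ _).map eB.inv)
  replace hf : (Fbar : Shat C ⥤ _).map f =
      (Fbar : Shat C ⥤ _).map eA.hom ≫ t ≫ (Fbar : Shat C ⥤ _).map eB.inv := hf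
  refine ⟨eA.inv ≫ f ≫ eB.hom, ?_⟩
  rw [Functor.map_comp, Functor.map_comp, hf]
  simp only [Category.assoc, ← Functor.map_comp]
  simp [eA.inv_hom_id, eB.inv_hom_id]

theorem shat_to_presheaves_fullyFaithful' :
    ∃ F : Shat C ⥤ (Cᵒᵖ ⥤ Type v),
      (evtInv C).Q ⋙ F = tildeFunctor C ∧ F.Full ∧ F.Faithful ∧
        ∀ G : Cᵒᵖ ⥤ Type v,
          F.essImage G ↔ ∃ X : CauchCat C, Nonempty (G ≅ colimit (X.obj ⋙ yoneda)) := by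
  haveI : ((evtInv C).Q).EssSurj := Localization.essSurj (L := (evtInv C).Q) (evtInv C)
  refine ⟨Fbar, Fbar_fac, Fbar_full, Fbar_faithful, fun G => ?_⟩
  constructor
  · rintro ⟨A, ⟨e⟩⟩
    refine ⟨((evtInv C).Q).objPreimage A,
      ⟨e.symm ≪≫ (Fbar : Shat C ⥤ _).mapIso (((evtInv C).Q).objObjPreimageIso A).symm ≪≫
        eqToIso (Fbar_obj _)⟩⟩
  · rintro ⟨X, ⟨e⟩⟩
    exact ⟨(evtInv C).Q.obj X, ⟨eqToIso (Fbar_obj X) ≪≫ e.symm⟩⟩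

end Development

theorem shat_to_presheaves_fullyFaithful :
    ∃ F : Shat C ⥤ (Cᵒᵖ ⥤ Type v),
      (evtInv C).Q ⋙ F = tildeFunctor C ∧ F.Full ∧ F.Faithful ∧
        ∀ G : Cᵒᵖ ⥤ Type v,
          F.essImage G ↔ ∃ X : CauchCat C, Nonempty (G ≅ colimit (X.obj ⋙ yoneda)) := by
  exact shat_to_presheaves_fullyFaithful'

end SeqCompletion
end

section
/- Let C be a triangulated category and let G be an object that generates C, i.e. C has no proper thick subcategory containing G. Then a sequence X₀ → X₁ → X₂ → ⋯ in C is a Cauchy sequence if and only if for every n ∈ ℤ the induced map Hom(ΣⁿG, X_i) → Hom(ΣⁿG, X_{i+1}) is bijective for all sufficiently large i. -/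
/-!
STATEMENT 15: Let `C` be a triangulated category and `G` an object generating `C`
(no proper thick subcategory contains `G`).  A sequence `X : ℕ ⥤ C` is Cauchy iff for
every `n : ℤ` the maps `Hom(ΣⁿG, Xᵢ) ⟶ Hom(ΣⁿG, Xᵢ₊₁)` are bijective for `i` large.
-/

open CategoryTheory CategoryTheory.Limits CategoryTheory.Pretriangulated

universe v u

namespace SeqCompletion

variable (C : Type u) [Category.{v} C] [Preadditive C] [HasZeroObject C]
  [HasShift C ℤ] [∀ n : ℤ, (shiftFunctor C n).Additive] [Pretriangulated C]

/-- A thick subcategory of a triangulated category: a triangulated subcategory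
(containing the zero objects, closed under isomorphisms, shifts and extensions)
that is moreover closed under direct summands (retracts). -/
structure ThickSubcat : Type (max u v) where
  P : C → Prop
  zero : ∀ Z : C, Limits.IsZero Z → P Z
  isoClosed : ∀ {X Y : C}, (X ≅ Y) → P X → P Y
  shiftClosed : ∀ (X : C) (n : ℤ), P X → P (X⟦n⟧)
  extClosed : ∀ Tr ∈ distTriang C, P Tr.obj₁ → P Tr.obj₂ → P Tr.obj₃
  summandClosed : ∀ {X Z : C}, (∃ (s : Z ⟶ X) (r : X ⟶ Z), s ≫ r = 𝟙 Z) → P X → P Z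

variable {C}

/-!
The objects `Y` all of whose shifts have `Hom(Y, Xᵢ)` eventually constant along `X` form a thick
subcategory: closure under retracts is formal, and closure under extensions is a four-lemma chase in
the long exact `Hom(-, Xᵢ)`-sequences of a distinguished triangle. If it contains `G`, it contains
everything. For `ΣⁿG` it suffices to control the successor maps, since `Xᵢ ⟶ Xⱼ` is their composite.
-/

section

variable {D : Type*} [Category D]

lemma comp_bijective_of_retract {Y Z A B : D} (h : Retract Z Y) (f : A ⟶ B)
    (hY : Function.Bijective fun g : Y ⟶ A => g ≫ f) :
    Function.Bijective fun g : Z ⟶ A => g ≫ f := by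
  constructor
  · intro g₁ g₂ hg
    have hr : h.r ≫ g₁ = h.r ≫ g₂ := hY.injective (by simpa using congrArg (h.r ≫ ·) hg)
    simpa using congrArg (h.i ≫ ·) hr
  · intro b
    obtain ⟨u, hu⟩ := hY.surjective (h.r ≫ b)
    exact ⟨h.i ≫ u, by simpa using congrArg (h.i ≫ ·) hu⟩

lemma comp_bijective_of_isZero {Z A B : D} (hZ : IsZero Z) (f : A ⟶ B) :
    Function.Bijective fun g : Z ⟶ A => g ≫ f :=
  ⟨fun _ _ _ => hZ.eq_of_src _ _, fun _ => ⟨hZ.to_ A, hZ.eq_of_src _ _⟩⟩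

end

section Triangle

variable {T : Triangle C} {A B : C} (f : A ⟶ B)

lemma comp_injective_obj₃ (hT : T ∈ distTriang C)
    (h₂ : Function.Injective fun g : T.obj₂ ⟶ A => g ≫ f)
    (h₁' : Function.Injective fun g : T.obj₁⟦(1 : ℤ)⟧ ⟶ A => g ≫ f)
    (h₂' : Function.Surjective fun g : T.obj₂⟦(1 : ℤ)⟧ ⟶ A => g ≫ f) :
    Function.Injective fun g : T.obj₃ ⟶ A => g ≫ f := by
  suffices h : ∀ g : T.obj₃ ⟶ A, g ≫ f = 0 → g = 0 from fun g₁ g₂ hg =>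
    sub_eq_zero.mp (h _ (by simpa [Preadditive.sub_comp, sub_eq_zero] using hg))
  intro g hg
  have hg₂ : T.mor₂ ≫ g = 0 := h₂ (by simp [hg])
  obtain ⟨k, rfl⟩ := Triangle.yoneda_exact₃ T hT g hg₂
  obtain ⟨q, hq⟩ : ∃ q : T.obj₂⟦(1 : ℤ)⟧ ⟶ B, k ≫ f = T.mor₁⟦(1 : ℤ)⟧' ≫ q := by
    obtain ⟨q, hq⟩ := Triangle.yoneda_exact₃ T.rotate (rot_of_distTriang T hT) (k ≫ f)
      ((Category.assoc _ _ _).symm.trans hg)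
    exact ⟨-q, hq.trans ((Preadditive.neg_comp _ _).trans (Preadditive.comp_neg _ _).symm)⟩
  obtain ⟨q', rfl⟩ := h₂' q
  have hk : k = T.mor₁⟦(1 : ℤ)⟧' ≫ q' := h₁' (by simpa using hq)
  simp [hk, comp_distTriang_mor_zero₃₁_assoc _ hT]

lemma comp_surjective_obj₃ (hT : T ∈ distTriang C)
    (h₁ : Function.Injective fun g : T.obj₁ ⟶ A => g ≫ f)
    (h₂ : Function.Surjective fun g : T.obj₂ ⟶ A => g ≫ f)
    (h₁' : Function.Surjective fun g : T.obj₁⟦(1 : ℤ)⟧ ⟶ A => g ≫ f) :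
    Function.Surjective fun g : T.obj₃ ⟶ A => g ≫ f := by
  intro b
  obtain ⟨u, hu⟩ := h₂ (T.mor₂ ≫ b)
  have hu₁ : T.mor₁ ≫ u = 0 := h₁ (by simp [hu, comp_distTriang_mor_zero₁₂_assoc _ hT])
  obtain ⟨v, rfl⟩ := Triangle.yoneda_exact₂ T hT u hu₁
  obtain ⟨w, hw⟩ := Triangle.yoneda_exact₃ T hT (b - v ≫ f) (by simpa [sub_eq_zero] using hu.symm)
  obtain ⟨w', rfl⟩ := h₁' w
  exact ⟨v + T.mor₃ ≫ w', by simp [Preadditive.add_comp, ← hw]⟩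

lemma comp_bijective_obj₃ (hT : T ∈ distTriang C)
    (h₁ : Function.Bijective fun g : T.obj₁ ⟶ A => g ≫ f)
    (h₂ : Function.Bijective fun g : T.obj₂ ⟶ A => g ≫ f)
    (h₁' : Function.Bijective fun g : T.obj₁⟦(1 : ℤ)⟧ ⟶ A => g ≫ f)
    (h₂' : Function.Bijective fun g : T.obj₂⟦(1 : ℤ)⟧ ⟶ A => g ≫ f) :
    Function.Bijective fun g : T.obj₃ ⟶ A => g ≫ f :=
  ⟨comp_injective_obj₃ f hT h₂.1 h₁'.1 h₂'.2, comp_surjective_obj₃ f hT h₁.1 h₂.2 h₁'.2⟩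

end Triangle

section HomStabilizes

variable {D : Type*} [Category D]

def HomStabilizes (X : ℕ ⥤ D) (Y : D) : Prop :=
  ∀ᶠ i in Filter.atTop, ∀ j (hij : i ≤ j),
    Function.Bijective fun g : Y ⟶ X.obj i => g ≫ X.map (homOfLE hij)

lemma isCauchy_iff_forall_homStabilizes (X : ℕ ⥤ D) :
    IsCauchy X ↔ ∀ Y, HomStabilizes X Y := by
  simp only [IsCauchy, HomStabilizes, Filter.eventually_atTop]
  exact forall_congr' fun _ => exists_congr fun _ => forall_congr' fun _ => forall_comm

variable {X : ℕ ⥤ D}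

lemma HomStabilizes.of_retract {Y Z : D} (h : Retract Z Y) (hY : HomStabilizes X Y) :
    HomStabilizes X Z :=
  hY.mono fun _ hi j hij => comp_bijective_of_retract h _ (hi j hij)

lemma homStabilizes_of_isZero {Z : D} (hZ : IsZero Z) : HomStabilizes X Z :=
  .of_forall fun _ _ _ => comp_bijective_of_isZero hZ _

lemma homStabilizes_of_eventually_succ {Y : D}
    (h : ∀ᶠ i in Filter.atTop, Function.Bijective
      fun g : Y ⟶ X.obj i => g ≫ X.map (homOfLE (Nat.le_succ i))) :
    HomStabilizes X Y := by
  obtain ⟨N, hN⟩ := Filter.eventually_atTop.1 h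
  refine Filter.eventually_atTop.2 ⟨N, fun i hi j hij => ?_⟩
  induction j, hij using Nat.le_induction with
  | base =>
    simp only [homOfLE_refl, X.map_id, Category.comp_id]
    exact Function.bijective_id
  | succ j hij ih =>
    have hcomp : (fun g : Y ⟶ X.obj i => g ≫ X.map (homOfLE (hij.trans j.le_succ))) =
        (fun g => g ≫ X.map (homOfLE j.le_succ)) ∘ fun g => g ≫ X.map (homOfLE hij) := by
      funext g
      simp [← X.map_comp, homOfLE_comp]
    rw [hcomp]
    exact (hN j (hi.trans hij)).comp ih

end HomStabilizes

lemma HomStabilizes.of_distTriang {X : ℕ ⥤ C} {T : Triangle C} (hT : T ∈ distTriang C)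
    (h₁ : HomStabilizes X T.obj₁) (h₂ : HomStabilizes X T.obj₂)
    (h₁' : HomStabilizes X (T.obj₁⟦(1 : ℤ)⟧)) (h₂' : HomStabilizes X (T.obj₂⟦(1 : ℤ)⟧)) :
    HomStabilizes X T.obj₃ := by
  filter_upwards [h₁, h₂, h₁', h₂'] with i b₁ b₂ b₁' b₂' j hij
  exact comp_bijective_obj₃ _ hT (b₁ j hij) (b₂ j hij) (b₁' j hij) (b₂' j hij)

def homStabilizesThickSubcat (X : ℕ ⥤ C) : ThickSubcat C where
  P Y := ∀ m : ℤ, HomStabilizes X (Y⟦m⟧)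
  zero Z hZ m := homStabilizes_of_isZero ((shiftFunctor C m).map_isZero hZ)
  isoClosed e h m := (h m).of_retract (.ofIso ((shiftFunctor C m).mapIso e.symm))
  shiftClosed Y k h m := (h (k + m)).of_retract (.ofIso ((shiftFunctorAdd C k m).app Y).symm)
  extClosed T hT h₁ h₂ m :=
    .of_distTriang (Triangle.shift_distinguished T hT m) (h₁ m) (h₂ m)
      ((h₁ (m + 1)).of_retract (.ofIso ((shiftFunctorAdd C m 1).app T.obj₁).symm))
      ((h₂ (m + 1)).of_retract (.ofIso ((shiftFunctorAdd C m 1).app T.obj₂).symm))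
  summandClosed := by
    rintro Y Z ⟨s, r, hsr⟩ h m
    exact (h m).of_retract ((Retract.mk s r hsr).map (shiftFunctor C m))

theorem isCauchy_iff_generator_stable (G : C)
    (hGen : ∀ S : ThickSubcat C, S.P G → ∀ X : C, S.P X)
    (X : ℕ ⥤ C) :
    IsCauchy X ↔
      ∀ n : ℤ, ∃ N : ℕ, ∀ i : ℕ, N ≤ i →
        Function.Bijective
          (fun g : (G⟦n⟧) ⟶ X.obj i => g ≫ X.map (homOfLE (Nat.le_succ i))) := by
  simp only [isCauchy_iff_forall_homStabilizes, ← Filter.eventually_atTop]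
  constructor
  · exact fun h n => (h (G⟦n⟧)).mono fun i hi => hi (i + 1) i.le_succ
  · intro h Y
    have hG : (homStabilizesThickSubcat X).P G := fun n => homStabilizes_of_eventually_succ (h n)
    exact (hGen _ hG Y 0).of_retract (.ofIso ((shiftFunctorZero C ℤ).app Y).symm)

end SeqCompletion
end

section
/- Let Λ be a ring and let P = proj Λ be the category of finitely generated projective right Λ-modules. Then the functor K^{−,b}(P) → Add(K^b(P)^op, Ab), sending a complex X to the restriction h_X = Hom(−, X)|_{K^b(P)} of its Hom functor, is fully faithful. -/
/-!
STATEMENT 17: For a ring `Λ` with `P = proj Λ`, the functor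
`K^{-,b}(P) ⥤ Add(K^b(P)ᵒᵖ, Ab)`, `X ↦ Hom(-, X)|_{K^b(P)}`, is fully faithful.
Both homotopy categories are realized as full subcategories of the homotopy category of
cochain complexes of `Λ`-modules, and full faithfulness is expressed as bijectivity of
the restricted Yoneda map on each hom set.
-/

open CategoryTheory CategoryTheory.Limits

universe u

namespace SeqCompletion

variable (Λ : Type u) [Ring Λ]

/-- A complex of modules is a bounded complex of finitely generated projectives. -/
def IsBoundedProj (X : CochainComplex (ModuleCat.{u} Λ) ℤ) : Prop :=
  (∀ n : ℤ, Module.Finite Λ (X.X n) ∧ Module.Projective Λ (X.X n)) ∧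
    ∃ N : ℕ, ∀ n : ℤ, (N : ℤ) ≤ |n| → Limits.IsZero (X.X n)

/-- A complex of modules is a bounded above complex of finitely generated projectives
with bounded cohomology. -/
def IsBoundedAboveProjWithBoundedCohomology (X : CochainComplex (ModuleCat.{u} Λ) ℤ) : Prop :=
  (∀ n : ℤ, Module.Finite Λ (X.X n) ∧ Module.Projective Λ (X.X n)) ∧
    (∃ N : ℤ, ∀ n : ℤ, N ≤ n → Limits.IsZero (X.X n)) ∧
    (∃ N : ℕ, ∀ n : ℤ, (N : ℤ) ≤ |n| → Limits.IsZero (X.homology n))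

/-- The homotopy category `K^b(proj Λ)` of bounded complexes of finitely generated
projective modules, as a full subcategory of the homotopy category. -/
abbrev Kb := ObjectProperty.FullSubcategory
  (fun X : HomotopyCategory (ModuleCat.{u} Λ) (ComplexShape.up ℤ) => IsBoundedProj Λ X.as)

/-!
Choose `k` such that `Y` is acyclic in degrees `< k`. The canonical truncation `Y ⟶ τ≥k Y`
is a quasi-isomorphism, so it induces bijections on homotopy classes of maps out of
K-projective complexes, such as `X` and the objects of `K^b(P)`; hence `Y` may be replaced by
`τ≥k Y`, which vanishes in degrees `< k`. Maps into such a complex only see degrees `≥ k - 1`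
of the source, so precomposition with the brutal truncation `σ≥(k-1) X ⟶ X`, an object of
`K^b(P)`, is bijective. A natural transformation `h_X ⟶ h_Y` is thus determined by its value on
this inclusion, and it agrees with the induced map everywhere by naturality, because every map
from a bounded complex to `X` factors through some `σ≥m X`.
-/

open HomotopyCategory ZeroObject

section StupidTruncGE

variable {C : Type*} [Category C] [HasZeroMorphisms C] [HasZeroObject C]

noncomputable def stupidTruncGE (X : CochainComplex C ℤ) (m : ℤ) : CochainComplex C ℤ where
  X i := if m ≤ i then X.X i else 0
  d i j := if h : m ≤ i ∧ m ≤ j then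
      eqToHom (if_pos h.1) ≫ X.d i j ≫ eqToHom (if_pos h.2).symm else 0
  shape i j hij := by
    by_cases h : m ≤ i ∧ m ≤ j
    · rw [dif_pos h, X.shape i j hij, zero_comp, comp_zero]
    · rw [dif_neg h]
  d_comp_d' i j k _ _ := by
    by_cases h : m ≤ i ∧ m ≤ j
    · by_cases h' : m ≤ j ∧ m ≤ k
      · rw [dif_pos h, dif_pos h']
        simp
      · rw [dif_neg h', comp_zero]
    · rw [dif_neg h, zero_comp]

variable (X : CochainComplex C ℤ) (m : ℤ)

lemma stupidTruncGE_X_of_le {i : ℤ} (h : m ≤ i) : (stupidTruncGE X m).X i = X.X i := if_pos h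

lemma stupidTruncGE_d_of_le {i j : ℤ} (hi : m ≤ i) (hj : m ≤ j) :
    (stupidTruncGE X m).d i j = eqToHom (stupidTruncGE_X_of_le X m hi) ≫ X.d i j ≫
      eqToHom (stupidTruncGE_X_of_le X m hj).symm :=
  dif_pos ⟨hi, hj⟩

lemma isZero_stupidTruncGE_X {i : ℤ} (h : i < m) : IsZero ((stupidTruncGE X m).X i) := by
  change IsZero (if m ≤ i then X.X i else 0)
  rw [if_neg (not_le.2 h)]
  exact isZero_zero C

instance : (stupidTruncGE X m).IsStrictlyGE m :=
  (CochainComplex.isStrictlyGE_iff _ m).2 fun _ hi => isZero_stupidTruncGE_X X m hi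

noncomputable def ιStupidTruncGE : stupidTruncGE X m ⟶ X where
  f i := if h : m ≤ i then eqToHom (stupidTruncGE_X_of_le X m h) else 0
  comm' i j (hij : i + 1 = j) := by
    by_cases h : m ≤ i
    · rw [dif_pos h, dif_pos (show m ≤ j by omega), stupidTruncGE_d_of_le X m h (by omega)]
      simp
    · exact (isZero_stupidTruncGE_X X m (not_le.1 h)).eq_of_src _ _

lemma isIso_ιStupidTruncGE_f {i : ℤ} (h : m ≤ i) : IsIso ((ιStupidTruncGE X m).f i) := by
  change IsIso (dite _ _ _)
  rw [dif_pos h]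
  infer_instance

lemma exists_comp_ιStupidTruncGE {A : CochainComplex C ℤ} [A.IsStrictlyGE m] (u : A ⟶ X) :
    ∃ v : A ⟶ stupidTruncGE X m, v ≫ ιStupidTruncGE X m = u := by
  refine ⟨{ f i := if h : m ≤ i then u.f i ≫ eqToHom (stupidTruncGE_X_of_le X m h).symm else 0
            comm' i j (hij : i + 1 = j) := ?_ }, ?_⟩
  · by_cases h : m ≤ i
    · rw [dif_pos h, dif_pos (show m ≤ j by omega), stupidTruncGE_d_of_le X m h (by omega)]
      simp
    · exact (A.isZero_of_isStrictlyGE m i (not_le.1 h)).eq_of_src _ _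
  · ext i
    by_cases h : m ≤ i
    · simp [ιStupidTruncGE, dif_pos h]
    · exact (A.isZero_of_isStrictlyGE m i (not_le.1 h)).eq_of_src _ _

lemma exists_stupidTruncGE_map {m m' : ℤ} (h : m ≤ m') :
    ∃ w : stupidTruncGE X m' ⟶ stupidTruncGE X m,
      w ≫ ιStupidTruncGE X m = ιStupidTruncGE X m' ∧ ∀ i, m' ≤ i → IsIso (w.f i) := by
  have := (stupidTruncGE X m').isStrictlyGE_of_ge m m' h
  obtain ⟨w, hw⟩ := exists_comp_ιStupidTruncGE X m (ιStupidTruncGE X m')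
  refine ⟨w, hw, fun i hi => ?_⟩
  have := isIso_ιStupidTruncGE_f X m (h.trans hi)
  have : IsIso (w.f i ≫ (ιStupidTruncGE X m).f i) := by
    rw [← HomologicalComplex.comp_f, hw]
    exact isIso_ιStupidTruncGE_f X m' hi
  exact IsIso.of_isIso_comp_right (w.f i) ((ιStupidTruncGE X m).f i)

end StupidTruncGE

section Precomposition

variable {C : Type*} [Category C] [Preadditive C]
  {U W L : CochainComplex C ℤ} (k : ℤ) [L.IsStrictlyGE k] (φ : U ⟶ W)

lemma quotient_map_comp_injective_of_isStrictlyGE (hφ : ∀ i, k ≤ i → IsIso (φ.f i)) :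
    Function.Injective fun f : (quotient C _).obj W ⟶ (quotient C _).obj L =>
      (quotient C _).map φ ≫ f := by
  intro f g hfg
  obtain ⟨f, rfl⟩ := (quotient C _).map_surjective f
  obtain ⟨g, rfl⟩ := (quotient C _).map_surjective g
  simp only [← Functor.map_comp] at hfg
  let H := homotopyOfEq _ _ hfg
  let t (i j : ℤ) : W.X i ⟶ L.X j :=
    if h : k ≤ i then have := hφ i h; inv (φ.f i) ≫ H.hom i j else 0
  have ht {i : ℤ} (hi : k ≤ i) (j : ℤ) : φ.f i ≫ t i j = H.hom i j := by
    simp [t, dif_pos hi]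
  apply eq_of_homotopy
  refine
    { hom := t
      zero i j hij := by simp [t, H.zero i j hij]
      comm i := ?_ }
  by_cases hi : k ≤ i
  · have := hφ i hi
    rw [← cancel_epi (φ.f i)]
    have hcomm := H.comm i
    rw [dNext_eq _ (show (ComplexShape.up ℤ).Rel i (i + 1) from rfl),
      prevD_eq _ (show (ComplexShape.up ℤ).Rel (i - 1) i by simp)] at hcomm ⊢
    simp only [HomologicalComplex.comp_f] at hcomm
    rw [hcomm, Preadditive.comp_add, Preadditive.comp_add, φ.comm_assoc, ht (by omega),
      reassoc_of% (ht hi)]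
  · exact (L.isZero_of_isStrictlyGE k i (by omega)).eq_of_tgt _ _

lemma quotient_map_comp_surjective_of_isStrictlyGE (hφ : ∀ i, k - 1 ≤ i → IsIso (φ.f i)) :
    Function.Surjective fun f : (quotient C _).obj W ⟶ (quotient C _).obj L =>
      (quotient C _).map φ ≫ f := by
  intro g
  obtain ⟨g, rfl⟩ := (quotient C _).map_surjective g
  let f (i : ℤ) : W.X i ⟶ L.X i :=
    if h : k ≤ i then have := hφ i (by omega); inv (φ.f i) ≫ g.f i else 0
  have hf (i : ℤ) : φ.f i ≫ f i = g.f i := by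
    by_cases hi : k ≤ i
    · simp [f, dif_pos hi]
    · exact (L.isZero_of_isStrictlyGE k i (by omega)).eq_of_tgt _ _
  refine ⟨(quotient C _).map
    { f := f
      comm' i j (hij : i + 1 = j) := ?_ }, ?_⟩
  · by_cases hi : k - 1 ≤ i
    · have := hφ i hi
      rw [← cancel_epi (φ.f i), reassoc_of% (hf i), φ.comm_assoc, hf j, g.comm]
    · exact (L.isZero_of_isStrictlyGE k j (by omega)).eq_of_tgt _ _
  · dsimp only
    rw [← Functor.map_comp]
    congr 1
    ext i
    exact hf i

lemma quotient_map_comp_bijective_of_isStrictlyGE (hφ : ∀ i, k - 1 ≤ i → IsIso (φ.f i)) :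
    Function.Bijective fun f : (quotient C _).obj W ⟶ (quotient C _).obj L =>
      (quotient C _).map φ ≫ f :=
  ⟨quotient_map_comp_injective_of_isStrictlyGE k φ fun i hi => hφ i (by omega),
    quotient_map_comp_surjective_of_isStrictlyGE k φ hφ⟩

end Precomposition

section KProjective

variable {C : Type*} [Category C] [Abelian C]

attribute [local instance] HasDerivedCategory.standard

lemma comp_quotient_map_bijective_of_quasiIso (K : CochainComplex C ℤ) [K.IsKProjective]
    {L L' : CochainComplex C ℤ} (π : L ⟶ L') [QuasiIso π] :
    Function.Bijective fun f : (quotient C _).obj K ⟶ (quotient C _).obj L =>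
      f ≫ (quotient C _).map π := by
  have : IsIso (DerivedCategory.Qh.map ((quotient C _).map π)) :=
    Localization.inverts _ (HomotopyCategory.quasiIso C _) _
      ((quotient_map_mem_quasiIso_iff π).2 ‹_›)
  rw [← (CochainComplex.IsKProjective.Qh_map_bijective K _).of_comp_iff']
  convert (asIso (DerivedCategory.Qh.map ((quotient C _).map π))).homToEquiv.bijective.comp
    (CochainComplex.IsKProjective.Qh_map_bijective K _) using 1
  ext f
  simp

end KProjective

theorem _root_.CategoryTheory.Functor.map_bijective_of_comp_mono {C D : Type*} [Category C]
    [Category D] (F : C ⥤ D) {X Y Y' : C} (π : Y ⟶ Y') [Mono (F.map π)]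
    (hπ : Function.Bijective fun f : X ⟶ Y => f ≫ π)
    (hF : Function.Bijective (F.map : (X ⟶ Y') → (F.obj X ⟶ F.obj Y'))) :
    Function.Bijective (F.map : (X ⟶ Y) → (F.obj X ⟶ F.obj Y)) := by
  refine ⟨fun f g hfg => hπ.1 (hF.1 ?_), fun η => ?_⟩
  · simp only [F.map_comp, hfg]
  · obtain ⟨f', hf'⟩ := hF.2 (η ≫ F.map π)
    obtain ⟨f, rfl⟩ := hπ.2 f'
    exact ⟨f, by rwa [← cancel_mono (F.map π), ← F.map_comp]⟩

section ModuleCat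

variable {Λ}

lemma finite_and_projective_of_isZero {M : ModuleCat.{u} Λ} (hM : IsZero M) :
    Module.Finite Λ M ∧ Module.Projective Λ M := by
  have := ModuleCat.isZero_iff_subsingleton.1 hM
  have := hM.projective
  exact ⟨inferInstance, inferInstance⟩

lemma isKProjective_of_projective_of_isZero {X : CochainComplex (ModuleCat.{u} Λ) ℤ}
    (hX : ∀ n, Module.Projective Λ (X.X n)) {N : ℤ} (hN : ∀ n, N ≤ n → IsZero (X.X n)) :
    X.IsKProjective :=
  have : X.IsStrictlyLE N := (X.isStrictlyLE_iff N).2 fun n hn => hN n hn.le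
  have (n : ℤ) : Projective (X.X n) := by have := hX n; infer_instance
  CochainComplex.isKProjective_of_projective X N

lemma IsBoundedProj.isKProjective {A : CochainComplex (ModuleCat.{u} Λ) ℤ}
    (hA : IsBoundedProj Λ A) : A.IsKProjective := by
  obtain ⟨hAfp, N, hN⟩ := hA
  exact isKProjective_of_projective_of_isZero (fun n => (hAfp n).2) (N := N)
    fun n hn => hN n (hn.trans (le_abs_self n))

lemma IsBoundedProj.exists_isStrictlyGE {A : CochainComplex (ModuleCat.{u} Λ) ℤ}
    (hA : IsBoundedProj Λ A) : ∃ m : ℤ, A.IsStrictlyGE m := by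
  obtain ⟨-, N, hN⟩ := hA
  exact ⟨-N, (A.isStrictlyGE_iff _).2 fun n hn => hN n (by rw [abs_of_neg (by omega)]; omega)⟩

lemma isBoundedProj_stupidTruncGE {X : CochainComplex (ModuleCat.{u} Λ) ℤ}
    (hX : ∀ n, Module.Finite Λ (X.X n) ∧ Module.Projective Λ (X.X n))
    {N : ℤ} (hN : ∀ n, N ≤ n → IsZero (X.X n)) (m : ℤ) :
    IsBoundedProj Λ (stupidTruncGE X m) := by
  refine ⟨fun n => ?_, m.natAbs + N.natAbs + 1, fun n hn => ?_⟩
  · by_cases h : m ≤ n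
    · rw [stupidTruncGE_X_of_le X m h]
      exact hX n
    · exact finite_and_projective_of_isZero (isZero_stupidTruncGE_X X m (not_le.1 h))
  · rcases le_abs'.1 hn with h | h
    · exact isZero_stupidTruncGE_X X m (by omega)
    · rw [stupidTruncGE_X_of_le X m (by omega)]
      exact hN n (by omega)

end ModuleCat

noncomputable abbrev restrictedYoneda :
    HomotopyCategory (ModuleCat.{u} Λ) (ComplexShape.up ℤ) ⥤
      ((Kb Λ)ᵒᵖ ⥤ AddCommGrpCat.{u}) :=
  preadditiveYoneda ⋙ (Functor.whiskeringLeft _ _ _).obj (ObjectProperty.ι _).op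

variable {Λ}

section NatTrans

variable {X L : HomotopyCategory (ModuleCat.{u} Λ) (ComplexShape.up ℤ)}
  (η : (restrictedYoneda Λ).obj X ⟶ (restrictedYoneda Λ).obj L)

lemma restrictedYoneda_app_comp {A B : Kb Λ} (v : A.obj ⟶ B.obj) (x : B.obj ⟶ X) :
    η.app (.op A) (v ≫ x) = v ≫ η.app (.op B) x :=
  ConcreteCategory.congr_hom (η.naturality (ObjectProperty.homMk v).op) x

lemma restrictedYoneda_app_eq_of_comp (f : X ⟶ L) {A B : Kb Λ} (w : A.obj ⟶ B.obj)
    (hw : Function.Injective fun g : B.obj ⟶ L => w ≫ g) (x : B.obj ⟶ X)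
    (h : η.app (.op A) (w ≫ x) = (w ≫ x) ≫ f) :
    η.app (.op B) x = x ≫ f :=
  hw (by
    change w ≫ _ = w ≫ _
    rw [← restrictedYoneda_app_comp, h, Category.assoc])

end NatTrans

lemma mono_restrictedYoneda_map_of_quasiIso {L L' : CochainComplex (ModuleCat.{u} Λ) ℤ}
    (π : L ⟶ L') [QuasiIso π] :
    Mono ((restrictedYoneda Λ).map ((quotient _ _).map π)) := by
  have (A : (Kb Λ)ᵒᵖ) : Mono (((restrictedYoneda Λ).map ((quotient _ _).map π)).app A) := by
    have := A.unop.property.isKProjective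
    exact (AddCommGrpCat.mono_iff_injective _).2
      (comp_quotient_map_bijective_of_quasiIso A.unop.obj.as π).1
  exact NatTrans.mono_of_mono_app _

theorem restrictedYoneda_map_bijective_of_isStrictlyGE {X L : CochainComplex (ModuleCat.{u} Λ) ℤ}
    (hX : ∀ n, Module.Finite Λ (X.X n) ∧ Module.Projective Λ (X.X n))
    {N : ℤ} (hN : ∀ n, N ≤ n → IsZero (X.X n)) (k : ℤ) [L.IsStrictlyGE k] :
    Function.Bijective ((restrictedYoneda Λ).map :
      ((quotient _ _).obj X ⟶ (quotient _ _).obj L) → _) := by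
  let T (m : ℤ) : Kb Λ :=
    ⟨(quotient _ _).obj (stupidTruncGE X m), isBoundedProj_stupidTruncGE hX hN m⟩
  let ι (m : ℤ) : (T m).obj ⟶ (quotient _ _).obj X := (quotient _ _).map (ιStupidTruncGE X m)
  have hι : Function.Bijective fun f : (quotient _ _).obj X ⟶ (quotient _ _).obj L =>
      ι (k - 1) ≫ f :=
    quotient_map_comp_bijective_of_isStrictlyGE k _ fun i hi => isIso_ιStupidTruncGE_f X _ hi
  refine ⟨fun f g hfg => hι.1 ?_, fun η => ?_⟩
  · exact ConcreteCategory.congr_hom (congr_app hfg (.op (T (k - 1)))) (ι (k - 1))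
  obtain ⟨f, hf⟩ := hι.2 (η.app (.op (T (k - 1))) (ι (k - 1)))
  have hη (m : ℤ) (hm : m ≤ k - 1) : η.app (.op (T m)) (ι m) = ι m ≫ f := by
    obtain ⟨w, hw, hw_iso⟩ := exists_stupidTruncGE_map X hm
    let w' : (T (k - 1)).obj ⟶ (T m).obj := (quotient _ _).map w
    have hwι : w' ≫ ι m = ι (k - 1) := by
      simp only [w', ι, ← Functor.map_comp, hw]
    refine restrictedYoneda_app_eq_of_comp η f w'
      (quotient_map_comp_injective_of_isStrictlyGE k w fun i hi => hw_iso i (by omega)) _ ?_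
    rw [hwι]
    exact hf.symm
  refine ⟨f, NatTrans.ext (funext fun A => AddCommGrpCat.ext fun x => ?_)⟩
  obtain ⟨A⟩ := A
  obtain ⟨m, hm, v, rfl⟩ : ∃ m ≤ k - 1, ∃ v : A.obj ⟶ (T m).obj, x = v ≫ ι m := by
    obtain ⟨m₀, hm₀⟩ := A.property.exists_isStrictlyGE
    have := CochainComplex.isStrictlyGE_of_ge A.obj.as (min m₀ (k - 1)) m₀ (min_le_left _ _)
    obtain ⟨x, rfl⟩ := (quotient _ _).map_surjective x
    obtain ⟨v, rfl⟩ := exists_comp_ιStupidTruncGE X (min m₀ (k - 1)) x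
    exact ⟨_, min_le_right _ _, (quotient _ _).map v, Functor.map_comp _ _ _⟩
  change (v ≫ ι m) ≫ f = _
  rw [restrictedYoneda_app_comp, hη m hm, Category.assoc]

theorem Kminusb_to_functors_on_Kb_fullyFaithful (X Y : HomotopyCategory (ModuleCat.{u} Λ) (ComplexShape.up ℤ))
    (hX : IsBoundedAboveProjWithBoundedCohomology Λ X.as)
    (hY : IsBoundedAboveProjWithBoundedCohomology Λ Y.as) :
    Function.Bijective
      (fun f : X ⟶ Y =>
        Functor.whiskerLeft (ObjectProperty.ι
            (fun Z : HomotopyCategory (ModuleCat.{u} Λ) (ComplexShape.up ℤ) =>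
              IsBoundedProj Λ Z.as)).op
          (preadditiveYoneda.map f)) := by
  obtain ⟨hXfp, ⟨N, hN⟩, -⟩ := hX
  obtain ⟨k, hk⟩ : ∃ k : ℤ, CochainComplex.IsGE Y.as k := by
    obtain ⟨-, -, ⟨M, hM⟩⟩ := hY
    refine ⟨-M, (CochainComplex.isGE_iff _ _).2 fun i hi => ?_⟩
    exact (Y.as.exactAt_iff_isZero_homology i).2 (hM i (by rw [abs_of_neg (by omega)]; omega))
  have := isKProjective_of_projective_of_isZero (fun n => (hXfp n).2) hN
  have := mono_restrictedYoneda_map_of_quasiIso (CochainComplex.πTruncGE Y.as k)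
  change Function.Bijective ((restrictedYoneda Λ).map :
    ((quotient _ _).obj X.as ⟶ (quotient _ _).obj Y.as) → _)
  exact (restrictedYoneda Λ).map_bijective_of_comp_mono
    ((quotient _ _).map (CochainComplex.πTruncGE Y.as k))
    (comp_quotient_map_bijective_of_quasiIso X.as _)
    (restrictedYoneda_map_bijective_of_isStrictlyGE hXfp hN k)

end SeqCompletion
end

section
/- Let T and T₁ be triangulated categories and Q₀ : T → T₁ a fully faithful triangle functor admitting a left adjoint P₀ and a right adjoint P₁ (both triangle functors). Let M : T₁ → Arrow(T) be the functor sending X to the morphism αX : P₁X → P₀X characterized by the property that Q₀(αX) equals the composite Q₀P₁X → X → Q₀P₀X of the adjunction counit and unit. If M is an epivalence (i.e. M is full, conservative, and essentially surjective), then: (a) P₁ admits a fully faithful right adjoint whose essential image is Ker P₀ = {Y ∈ T₁ : P₀Y ≅ 0}; and (b) Hom_{T₁}(X, Y) = 0 for every X with P₁X ≅ 0 and every Y with P₀Y ≅ 0. -/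
/-!
STATEMENT 19: Let `Q₀ : T ⥤ T₁` be a fully faithful triangle functor between
triangulated categories with a left adjoint `P₀` and a right adjoint `P₁` (both
triangle functors), and let `M : T₁ ⥤ Arrow T` send `X` to `αX : P₁X ⟶ P₀X` with
`Q₀(αX)` the composite of the adjunction morphisms `Q₀P₁X ⟶ X ⟶ Q₀P₀X`.  If `M` is an
epivalence (full, conservative and essentially surjective) then:
(a) `P₁` admits a fully faithful right adjoint whose essential image is `Ker P₀`; and
(b) `Hom(X, Y) = 0` whenever `P₁X ≅ 0` and `P₀Y ≅ 0`.
-/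

open CategoryTheory CategoryTheory.Limits CategoryTheory.Pretriangulated

universe v₁ v₂ u₁ u₂

namespace MorphicEnhancement

variable {T : Type u₁} [Category.{v₁} T] [Preadditive T] [HasZeroObject T]
  [HasShift T ℤ] [∀ n : ℤ, (shiftFunctor T n).Additive] [Pretriangulated T]
variable {T₁ : Type u₂} [Category.{v₂} T₁] [Preadditive T₁] [HasZeroObject T₁]
  [HasShift T₁ ℤ] [∀ n : ℤ, (shiftFunctor T₁ n).Additive] [Pretriangulated T₁]

variable (Q₀ : T ⥤ T₁) (P₀ P₁ : T₁ ⥤ T)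

/-- The functor `M : T₁ ⥤ Arrow T` sending `X` to `αX : P₁X ⟶ P₀X`, where
`Q₀ (αX)` is the composition `Q₀P₁X ⟶ X ⟶ Q₀P₀X` of the adjunction morphisms. -/
noncomputable def Mfun [Q₀.Full] [Q₀.Faithful] (adj₀ : P₀ ⊣ Q₀) (adj₁ : Q₀ ⊣ P₁) :
    T₁ ⥤ Arrow T where
  obj X := Arrow.mk (Q₀.preimage (adj₁.counit.app X ≫ adj₀.unit.app X))
  map {X Y} f := Arrow.homMk (u := P₁.map f) (v := P₀.map f) (by
    apply Q₀.map_injective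
    simp only [Arrow.mk_hom, Functor.map_comp, Functor.map_preimage]
    rw [← Category.assoc, adj₁.counit_naturality f, Category.assoc, Category.assoc,
      ← adj₀.unit_naturality f])
  map_id X := by
    apply Arrow.hom_ext <;> simp
  map_comp f g := by
    apply Arrow.hom_ext <;> simp


/-!
Since `M` is full and conservative, questions about morphisms of `T₁` can be transported to
`Arrow T`. For (b), complete `f : X ⟶ Y` to a triangle `X ⟶ Y ⟶ C ⟶ X⟦1⟧`: as `P₁ X ≅ 0`, the
map `P₁ g` is invertible, and as `P₀ Y ≅ 0` this makes `M g` a split mono; hence `g` is a split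
mono and `f ≫ g = 0` forces `f = 0`.

For (a), pick `R Z` with `M (R Z) ≅ (Z ⟶ 0)`. Then `f ↦ P₁ f ≫ (P₁ (R Z) ≅ Z)` is a bijection
`(X ⟶ R Z) ≃ (P₁ X ⟶ Z)`: it is onto by fullness of `M`, and one-to-one because `P₁` detects
morphisms into `Ker P₀`, by (b) applied to the cone of the counit `Q₀ P₁ X ⟶ X`, which lies in
`Ker P₁`. The counit of the resulting adjunction is invertible, so `R` is fully faithful, and
conservativity of `M` identifies its essential image with `Ker P₀`.
-/

open ZeroObject

section

variable {C D : Type*} [Category C] [Category D]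

lemma _root_.CategoryTheory.Functor.isSplitMono_of_full_of_reflectsIsomorphisms (F : C ⥤ D)
    [F.Full] [F.ReflectsIsomorphisms] {X Y : C} (g : X ⟶ Y) [IsSplitMono (F.map g)] :
    IsSplitMono g := by
  let r := F.preimage (retraction (F.map g))
  have : IsIso (F.map (g ≫ r)) := by
    rw [F.map_comp, F.map_preimage, IsSplitMono.id]
    infer_instance
  have : IsIso (g ≫ r) := isIso_of_reflects_iso _ F
  exact IsSplitMono.mk' ⟨r ≫ inv (g ≫ r), by rw [← Category.assoc, IsIso.hom_inv_id]⟩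

lemma _root_.CategoryTheory.Functor.nonempty_iso_of_full_of_reflectsIsomorphisms (F : C ⥤ D)
    [F.Full] [F.ReflectsIsomorphisms] {X Y : C} (e : F.obj X ≅ F.obj Y) : Nonempty (X ≅ Y) := by
  have : IsIso (F.map (F.preimage e.hom)) := by rw [F.map_preimage]; infer_instance
  have : IsIso (F.preimage e.hom) := isIso_of_reflects_iso _ F
  exact ⟨asIso (F.preimage e.hom)⟩

lemma _root_.CategoryTheory.Arrow.isSplitMono_of_isIso_left [HasZeroMorphisms C] {A B : Arrow C}
    (φ : A ⟶ B) [IsIso φ.left] (hA : IsZero A.right) : IsSplitMono φ :=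
  IsSplitMono.mk'
    { retraction := Arrow.homMk (inv φ.left) 0 (hA.eq_of_tgt _ _)
      id := Arrow.hom_ext _ _ (by simp) (hA.eq_of_src _ _) }

end

section

variable {C D : Type*} [Category C] [Preadditive C] [HasZeroObject C] [HasShift C ℤ]
  [∀ n : ℤ, (shiftFunctor C n).Additive] [Pretriangulated C]
  [Category D] [Preadditive D] [HasZeroObject D] [HasShift D ℤ]
  [∀ n : ℤ, (shiftFunctor D n).Additive] [Pretriangulated D]

lemma _root_.CategoryTheory.Adjunction.eq_zero_of_map_eq_zero {Q : C ⥤ D} {P : D ⥤ C}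
    (adj : Q ⊣ P) [Q.Full] [Q.Faithful] [P.CommShift ℤ] [P.IsTriangulated] {X Y : D}
    (hY : ∀ W : D, IsZero (P.obj W) → ∀ e : W ⟶ Y, e = 0) (g : X ⟶ Y) (hg : P.map g = 0) :
    g = 0 := by
  have := adj.isLeftAdjoint
  have hεg : adj.counit.app X ≫ g = 0 := by simpa [hg] using (adj.counit.naturality g).symm
  obtain ⟨W, p, q, hT⟩ := distinguished_cocone_triangle (adj.counit.app X)
  obtain ⟨e, he⟩ := Triangle.yoneda_exact₂ _ hT g hεg
  have hW : IsZero (P.obj W) :=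
    Triangle.isZero₃_of_isIso₁ _ (P.map_distinguished _ hT)
      (inferInstanceAs (IsIso (P.map (adj.counit.app X))))
  have he0 : e = 0 := hY _ hW e
  rw [he, he0]
  exact comp_zero

end

section

variable [Q₀.Full] [Q₀.Faithful] [P₁.CommShift ℤ] [P₁.IsTriangulated]

lemma eq_zero_of_isZero_P₁_of_isZero_P₀ (adj₀ : P₀ ⊣ Q₀) (adj₁ : Q₀ ⊣ P₁)
    [(Mfun Q₀ P₀ P₁ adj₀ adj₁).Full] [(Mfun Q₀ P₀ P₁ adj₀ adj₁).ReflectsIsomorphisms] {X Y : T₁}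
    (hX : IsZero (P₁.obj X)) (hY : IsZero (P₀.obj Y)) (f : X ⟶ Y) : f = 0 := by
  obtain ⟨C, g, h, hT⟩ := distinguished_cocone_triangle f
  have : IsIso (P₁.map g) := (Triangle.isZero₁_iff_isIso₂ _ (P₁.map_distinguished _ hT)).1 hX
  have : IsIso ((Mfun Q₀ P₀ P₁ adj₀ adj₁).map g).left := this
  have := Arrow.isSplitMono_of_isIso_left ((Mfun Q₀ P₀ P₁ adj₀ adj₁).map g) hY
  have := (Mfun Q₀ P₀ P₁ adj₀ adj₁).isSplitMono_of_full_of_reflectsIsomorphisms g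
  rw [← cancel_mono g, zero_comp]
  exact comp_distTriang_mor_zero₁₂ _ hT

end

section RightAdjoint

variable [Q₀.Full] [Q₀.Faithful] (adj₀ : P₀ ⊣ Q₀) (adj₁ : Q₀ ⊣ P₁)
  [(Mfun Q₀ P₀ P₁ adj₀ adj₁).EssSurj]

noncomputable def rightAdjointObj (Z : T) : T₁ :=
  (Mfun Q₀ P₀ P₁ adj₀ adj₁).objPreimage (Arrow.mk (0 : Z ⟶ 0))

noncomputable def rightAdjointObjIso (Z : T) :
    (Mfun Q₀ P₀ P₁ adj₀ adj₁).obj (rightAdjointObj Q₀ P₀ P₁ adj₀ adj₁ Z) ≅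
      Arrow.mk (0 : Z ⟶ 0) :=
  (Mfun Q₀ P₀ P₁ adj₀ adj₁).objObjPreimageIso _

noncomputable def rightAdjointCounitIso (Z : T) :
    P₁.obj (rightAdjointObj Q₀ P₀ P₁ adj₀ adj₁ Z) ≅ Z :=
  Arrow.leftFunc.mapIso (rightAdjointObjIso Q₀ P₀ P₁ adj₀ adj₁ Z)

variable [P₁.CommShift ℤ] [P₁.IsTriangulated] [(Mfun Q₀ P₀ P₁ adj₀ adj₁).Full]
  [(Mfun Q₀ P₀ P₁ adj₀ adj₁).ReflectsIsomorphisms]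

lemma bijective_map_comp_rightAdjointCounitIso_hom (X : T₁) (Z : T) :
    Function.Bijective fun f : X ⟶ rightAdjointObj Q₀ P₀ P₁ adj₀ adj₁ Z =>
      P₁.map f ≫ (rightAdjointCounitIso Q₀ P₀ P₁ adj₀ adj₁ Z).hom := by
  constructor
  · intro f f' h
    rw [cancel_mono] at h
    rw [← sub_eq_zero]
    have hR : IsZero (P₀.obj (rightAdjointObj Q₀ P₀ P₁ adj₀ adj₁ Z)) :=
      (isZero_zero T).of_iso (Arrow.rightFunc.mapIso (rightAdjointObjIso Q₀ P₀ P₁ adj₀ adj₁ Z))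
    refine adj₁.eq_zero_of_map_eq_zero
      (fun W hW e => eq_zero_of_isZero_P₁_of_isZero_P₀ Q₀ P₀ P₁ adj₀ adj₁ hW hR e) _ ?_
    rw [P₁.map_sub, h, sub_self]
  · intro g
    let φ : (Mfun Q₀ P₀ P₁ adj₀ adj₁).obj X ⟶ Arrow.mk (0 : Z ⟶ 0) :=
      Arrow.homMk g 0 ((isZero_zero T).eq_of_tgt _ _)
    refine ⟨(Mfun Q₀ P₀ P₁ adj₀ adj₁).preimage (φ ≫ (rightAdjointObjIso Q₀ P₀ P₁ adj₀ adj₁ Z).inv),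
      ?_⟩
    change ((Mfun Q₀ P₀ P₁ adj₀ adj₁).map _).left ≫
      (rightAdjointObjIso Q₀ P₀ P₁ adj₀ adj₁ Z).hom.left = g
    rw [Functor.map_preimage, ← Arrow.comp_left, Category.assoc, Iso.inv_hom_id,
      Category.comp_id]
    rfl

noncomputable def rightAdjointHomEquiv (X : T₁) (Z : T) :
    (P₁.obj X ⟶ Z) ≃ (X ⟶ rightAdjointObj Q₀ P₀ P₁ adj₀ adj₁ Z) :=
  (Equiv.ofBijective _ (bijective_map_comp_rightAdjointCounitIso_hom Q₀ P₀ P₁ adj₀ adj₁ X Z)).symm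

noncomputable def rightAdjoint : T ⥤ T₁ :=
  Adjunction.rightAdjointOfEquiv (rightAdjointHomEquiv Q₀ P₀ P₁ adj₀ adj₁) fun X' X Z f g => by
    rw [rightAdjointHomEquiv, Equiv.symm_apply_eq, Equiv.ofBijective_apply, P₁.map_comp,
      Category.assoc]
    congr 1
    exact (Equiv.apply_symm_apply (Equiv.ofBijective _
      (bijective_map_comp_rightAdjointCounitIso_hom Q₀ P₀ P₁ adj₀ adj₁ X Z)) g).symm

noncomputable def adjunction : P₁ ⊣ rightAdjoint Q₀ P₀ P₁ adj₀ adj₁ :=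
  Adjunction.adjunctionOfEquivRight _ _

lemma adjunction_counit_app (Z : T) :
    (adjunction Q₀ P₀ P₁ adj₀ adj₁).counit.app Z =
      (rightAdjointCounitIso Q₀ P₀ P₁ adj₀ adj₁ Z).hom := by
  change P₁.map (𝟙 _) ≫ _ = _
  rw [P₁.map_id]
  exact Category.id_comp _

instance isIso_adjunction_counit : IsIso (adjunction Q₀ P₀ P₁ adj₀ adj₁).counit := by
  have (Z : T) : IsIso ((adjunction Q₀ P₀ P₁ adj₀ adj₁).counit.app Z) := by
    rw [adjunction_counit_app]
    exact Iso.isIso_hom _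
  exact NatIso.isIso_of_isIso_app _

lemma rightAdjoint_essImage_iff (Y : T₁) :
    (rightAdjoint Q₀ P₀ P₁ adj₀ adj₁).essImage Y ↔ IsZero (P₀.obj Y) := by
  constructor
  · rintro ⟨Z, ⟨e⟩⟩
    exact ((isZero_zero T).of_iso
      (Arrow.rightFunc.mapIso (rightAdjointObjIso Q₀ P₀ P₁ adj₀ adj₁ Z))).of_iso (P₀.mapIso e.symm)
  · intro hY
    let e₀ : (Mfun Q₀ P₀ P₁ adj₀ adj₁).obj Y ≅ Arrow.mk (0 : P₁.obj Y ⟶ 0) :=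
      Arrow.isoMk (Iso.refl _) (hY.iso (isZero_zero T)) ((isZero_zero T).eq_of_tgt _ _)
    obtain ⟨e⟩ := (Mfun Q₀ P₀ P₁ adj₀ adj₁).nonempty_iso_of_full_of_reflectsIsomorphisms
      (e₀ ≪≫ (rightAdjointObjIso Q₀ P₀ P₁ adj₀ adj₁ (P₁.obj Y)).symm)
    exact ⟨P₁.obj Y, ⟨e.symm⟩⟩

end RightAdjoint

theorem epivalence_morphic_enhancement [Q₀.Full] [Q₀.Faithful]
    [P₁.CommShift ℤ] [P₁.IsTriangulated]
    (adj₀ : P₀ ⊣ Q₀) (adj₁ : Q₀ ⊣ P₁)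
    (hfull : (Mfun Q₀ P₀ P₁ adj₀ adj₁).Full)
    (hconservative : ∀ {X Y : T₁} (f : X ⟶ Y),
      IsIso ((Mfun Q₀ P₀ P₁ adj₀ adj₁).map f) → IsIso f)
    (hessSurj : (Mfun Q₀ P₀ P₁ adj₀ adj₁).EssSurj) :
    (∃ (R : T ⥤ T₁) (_ : P₁ ⊣ R), R.Full ∧ R.Faithful ∧
      ∀ Y : T₁, R.essImage Y ↔ Limits.IsZero (P₀.obj Y)) ∧
    (∀ X Y : T₁, Limits.IsZero (P₁.obj X) → Limits.IsZero (P₀.obj Y) →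
      ∀ f : X ⟶ Y, f = 0) := by
  have : (Mfun Q₀ P₀ P₁ adj₀ adj₁).ReflectsIsomorphisms := ⟨hconservative⟩
  have hR := (adjunction Q₀ P₀ P₁ adj₀ adj₁).fullyFaithfulROfIsIsoCounit
  exact ⟨⟨rightAdjoint Q₀ P₀ P₁ adj₀ adj₁, adjunction Q₀ P₀ P₁ adj₀ adj₁, hR.full, hR.faithful,
      rightAdjoint_essImage_iff Q₀ P₀ P₁ adj₀ adj₁⟩,
    fun _ _ hX hY f => eq_zero_of_isZero_P₁_of_isZero_P₀ Q₀ P₀ P₁ adj₀ adj₁ hX hY f⟩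

end MorphicEnhancement
end
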